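/- arXiv:2305.11780 — 7 statements merged into one kernel-verified Lean document; each statement's English description precedes it below -/
import Mathlib

section
/- Fix an integer d ≥ 1. Let N(ℂ^d) denote the set of triples (F, G, p) where F and G are complete flags of ℂ^d and p ⊂ ℂ^d is a 1-dimensional subspace, such that F^k + G^{d−k} = ℂ^d and F^{k−1} + G^{d−k} + p = ℂ^d for every k ∈ {1,…,d}. Then GL_d(ℂ) acts on N(ℂ^d) by g·(F,G,p) = (g·F, g·G, g(p)), this action is transitive, and any element of GL_d(ℂ) fixing some point of N(ℂ^d) is a nonzero scalar multiple of the identity; consequently, for any two points of N(ℂ^d) there is a g ∈ GL_d(ℂ) carrying one to the other, and any two such g differ by multiplication by a nonzero scalar (i.e. PGL_d(ℂ) acts simply transitively on N(ℂ^d)). -/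
noncomputable section

/-- A complete flag of `ℂ^d`: an increasing chain of subspaces `F 0 ⊆ F 1 ⊆ ⋯` of `ℂ^d`
with `dim (F k) = k` for all `k ≤ d`. -/
def IsCompleteFlag (d : ℕ) (F : ℕ → Submodule ℂ (Fin d → ℂ)) : Prop :=
  Monotone F ∧ ∀ k, k ≤ d → Module.finrank ℂ ↥(F k) = k

/-- Two complete flags of `ℂ^d` are transverse: `F^k + G^(d-k) = ℂ^d` for all `k`. -/
def TransverseFlags (d : ℕ) (F G : ℕ → Submodule ℂ (Fin d → ℂ)) : Prop :=
  ∀ k, k ≤ d → F k ⊔ G (d - k) = ⊤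

/-- The flag `g · F`, whose subspaces are the images `g (F k)`. -/
def flagMap (d : ℕ) (g : Matrix (Fin d) (Fin d) ℂ) (F : ℕ → Submodule ℂ (Fin d → ℂ)) :
    ℕ → Submodule ℂ (Fin d → ℂ) :=
  fun k => Submodule.map g.mulVecLin (F k)

/-- `(F, G, p)` belongs to `N(ℂ^d)`: `F`, `G` are complete flags, `p` is a line, and for
every `k ∈ {1,…,d}` one has `F^k + G^(d-k) = ℂ^d` and `F^(k-1) + G^(d-k) + p = ℂ^d`. -/
def InN (d : ℕ) (F G : ℕ → Submodule ℂ (Fin d → ℂ)) (p : Submodule ℂ (Fin d → ℂ)) : Prop :=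
  IsCompleteFlag d F ∧ IsCompleteFlag d G ∧ Module.finrank ℂ ↥p = 1 ∧
    ∀ k, 1 ≤ k → k ≤ d → F k ⊔ G (d - k) = ⊤ ∧ F (k - 1) ⊔ G (d - k) ⊔ p = ⊤

section Helpers
open Module Submodule

lemma finrank_fun (d : ℕ) : finrank ℂ (Fin d → ℂ) = d := by simp

lemma finrank_top_fun (d : ℕ) : finrank ℂ (⊤ : Submodule ℂ (Fin d → ℂ)) = d := by
  rw [finrank_top, finrank_fun]

lemma flag_top {d : ℕ} {F : ℕ → Submodule ℂ (Fin d → ℂ)} (hF : IsCompleteFlag d F)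
    {k : ℕ} (hk : d ≤ k) : F k = ⊤ := by
  have h1 : F d = ⊤ := Submodule.eq_top_of_finrank_eq (by rw [hF.2 d le_rfl, finrank_fun])
  exact top_le_iff.mp (h1 ▸ hF.1 hk)

lemma flag_bot {d : ℕ} {F : ℕ → Submodule ℂ (Fin d → ℂ)} (hF : IsCompleteFlag d F) :
    F 0 = ⊥ := Submodule.finrank_eq_zero.mp (hF.2 0 (Nat.zero_le d))

lemma span_image_congr {d : ℕ} (v w : Fin d → (Fin d → ℂ))
    (h : ∀ i, Submodule.span ℂ {v i} = Submodule.span ℂ {w i}) (S : Set (Fin d)) :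
    Submodule.span ℂ (v '' S) = Submodule.span ℂ (w '' S) := by
  apply le_antisymm <;> rw [Submodule.span_le] <;> rintro x ⟨i, hi, rfl⟩
  · have h1 : v i ∈ Submodule.span ℂ {w i} := h i ▸ Submodule.mem_span_singleton_self _
    exact Submodule.span_mono (Set.singleton_subset_iff.mpr (Set.mem_image_of_mem w hi)) h1
  · have h1 : w i ∈ Submodule.span ℂ {v i} := (h i).symm ▸ Submodule.mem_span_singleton_self _
    exact Submodule.span_mono (Set.singleton_subset_iff.mpr (Set.mem_image_of_mem v hi)) h1

lemma exists_adapted_basis (d : ℕ) (F G : ℕ → Submodule ℂ (Fin d → ℂ))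
    (p : Submodule ℂ (Fin d → ℂ)) (h : InN d F G p) :
    ∃ b : Basis (Fin d) ℂ (Fin d → ℂ),
      (∀ k, k ≤ d → F k = Submodule.span ℂ (⇑b '' {i : Fin d | (i : ℕ) < k})) ∧
      (∀ k, k ≤ d → G k = Submodule.span ℂ (⇑b '' {i : Fin d | d - k ≤ (i : ℕ)})) ∧
      p = Submodule.span ℂ {∑ i, b i} ∧
      (∀ i : Fin d, F ((i : ℕ) + 1) ⊓ G (d - (i : ℕ)) = Submodule.span ℂ {b i}) := by
  obtain ⟨hF, hG, hp, hN⟩ := h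
  have htrans : ∀ k, k ≤ d → F k ⊔ G (d - k) = ⊤ := by
    intro k hk
    rcases Nat.eq_zero_or_pos k with rfl | hk1
    · rw [Nat.sub_zero, flag_top hG le_rfl, sup_top_eq]
    · exact (hN k hk1 hk).1
  have hdisj : ∀ k, k ≤ d → F k ⊓ G (d - k) = ⊥ := by
    intro k hk
    have h1 := Submodule.finrank_sup_add_finrank_inf_eq (F k) (G (d - k))
    rw [htrans k hk, hF.2 k hk, hG.2 (d - k) (Nat.sub_le d k), finrank_top_fun] at h1
    rw [← Submodule.finrank_eq_zero (S := F k ⊓ G (d - k))]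
    omega
  set L : Fin d → Submodule ℂ (Fin d → ℂ) := fun i => F ((i : ℕ) + 1) ⊓ G (d - (i : ℕ)) with hLdef
  have hLF : ∀ i, L i ≤ F ((i : ℕ) + 1) := fun i => inf_le_left
  have hLG : ∀ i, L i ≤ G (d - (i : ℕ)) := fun i => inf_le_right
  have hLrank : ∀ i, finrank ℂ (L i) = 1 := by
    intro i
    have hi : (i : ℕ) < d := i.isLt
    have hub : finrank ℂ (L i) ≤ 1 := by
      have hd1 : L i ⊓ F (i : ℕ) = ⊥ := by
        rw [← le_bot_iff, ← hdisj i (le_of_lt hi)]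
        exact le_inf inf_le_right ((inf_le_left.trans (hLG i)))
      have h1 := Submodule.finrank_sup_add_finrank_inf_eq (L i) (F (i : ℕ))
      rw [hd1, hF.2 i (le_of_lt hi)] at h1
      have h2 : L i ⊔ F (i : ℕ) ≤ F ((i : ℕ) + 1) := sup_le (hLF i) (hF.1 (Nat.le_succ _))
      have h3 : finrank ℂ ↥(L i ⊔ F (i : ℕ)) ≤ finrank ℂ ↥(F ((i : ℕ) + 1)) :=
        Submodule.finrank_mono h2
      rw [hF.2 ((i : ℕ) + 1) hi] at h3
      simp at h1
      omega
    have hlb : 1 ≤ finrank ℂ (L i) := by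
      have h1 := Submodule.finrank_sup_add_finrank_inf_eq (F ((i : ℕ) + 1)) (G (d - (i : ℕ)))
      have h2 : finrank ℂ ↥(F ((i : ℕ) + 1) ⊔ G (d - (i : ℕ))) ≤ d :=
        le_trans (Submodule.finrank_mono le_top) (le_of_eq (finrank_top_fun d))
      rw [hF.2 ((i : ℕ) + 1) hi, hG.2 (d - (i : ℕ)) (Nat.sub_le d _)] at h1
      have : finrank ℂ ↥(L i) = finrank ℂ ↥(F ((i:ℕ)+1) ⊓ G (d - (i:ℕ))) := rfl
      omega
    omega
  -- choose generators
  have hex : ∀ i, ∃ v, v ∈ L i ∧ v ≠ 0 := by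
    intro i
    have : L i ≠ ⊥ := by
      intro hbot
      have := hLrank i
      rw [hbot] at this
      simp at this
    obtain ⟨v, hv, hv0⟩ := Submodule.exists_mem_ne_zero_of_ne_bot this
    exact ⟨v, hv, hv0⟩
  choose u hu hu0 using hex
  have hspanL : ∀ i, Submodule.span ℂ {u i} = L i := by
    intro i
    apply Submodule.eq_of_le_of_finrank_le
    · rw [Submodule.span_le, Set.singleton_subset_iff]; exact hu i
    · rw [hLrank i, finrank_span_singleton (hu0 i)]
  -- successor relations
  have hF1 : ∀ i : Fin d, F ((i : ℕ) + 1) = F (i : ℕ) ⊔ Submodule.span ℂ {u i} := by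
    intro i
    have hi : (i : ℕ) < d := i.isLt
    symm
    apply Submodule.eq_of_le_of_finrank_le
    · exact sup_le (hF.1 (Nat.le_succ _)) ((hspanL i).le.trans (hLF i))
    · have hd1 : F (i : ℕ) ⊓ Submodule.span ℂ {u i} = ⊥ := by
        rw [← le_bot_iff, ← hdisj i (le_of_lt hi)]
        exact le_inf inf_le_left ((inf_le_right.trans ((hspanL i).le.trans (hLG i))))
      have h1 := Submodule.finrank_sup_add_finrank_inf_eq (F (i : ℕ)) (Submodule.span ℂ {u i})
      rw [hd1, hF.2 i (le_of_lt hi), finrank_span_singleton (hu0 i)] at h1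
      rw [hF.2 ((i : ℕ) + 1) hi]
      simp at h1
      omega
  have hG1 : ∀ i : Fin d, G (d - (i : ℕ)) = G (d - (i : ℕ) - 1) ⊔ Submodule.span ℂ {u i} := by
    intro i
    have hi : (i : ℕ) < d := i.isLt
    symm
    apply Submodule.eq_of_le_of_finrank_le
    · exact sup_le (hG.1 (Nat.sub_le _ _)) ((hspanL i).le.trans (hLG i))
    · have heq : d - (i : ℕ) - 1 = d - ((i : ℕ) + 1) := by omega
      have hd1 : G (d - (i : ℕ) - 1) ⊓ Submodule.span ℂ {u i} = ⊥ := by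
        rw [← le_bot_iff, ← hdisj ((i : ℕ) + 1) hi, heq]
        exact le_inf (inf_le_right.trans ((hspanL i).le.trans (hLF i))) inf_le_left
      have h1 := Submodule.finrank_sup_add_finrank_inf_eq (G (d - (i : ℕ) - 1))
        (Submodule.span ℂ {u i})
      rw [hd1, hG.2 (d - (i : ℕ) - 1) (by omega), finrank_span_singleton (hu0 i)] at h1
      rw [hG.2 (d - (i : ℕ)) (Nat.sub_le _ _)]
      simp at h1
      omega
  -- span formulas for u
  have hFspan : ∀ k, k ≤ d → F k = Submodule.span ℂ (u '' {i : Fin d | (i : ℕ) < k}) := by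
    intro k
    induction k with
    | zero =>
      intro _
      have : {i : Fin d | (i : ℕ) < 0} = (∅ : Set (Fin d)) := by ext i; simp
      rw [this, Set.image_empty, Submodule.span_empty, flag_bot hF]
    | succ k ih =>
      intro hk
      have hkd : k < d := hk
      have hset : {i : Fin d | (i : ℕ) < k + 1} =
          insert (⟨k, hkd⟩ : Fin d) {i : Fin d | (i : ℕ) < k} := by
        ext i; simp [Fin.ext_iff]; omega
      rw [hset, Set.image_insert_eq, Submodule.span_insert,
        ← ih (le_of_lt hkd)]
      have := hF1 ⟨k, hkd⟩
      simp only [Fin.val_mk] at this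
      rw [this, sup_comm]
  have hGspan : ∀ k, k ≤ d → G k = Submodule.span ℂ (u '' {i : Fin d | d - k ≤ (i : ℕ)}) := by
    intro k
    induction k with
    | zero =>
      intro _
      have : {i : Fin d | d - 0 ≤ (i : ℕ)} = (∅ : Set (Fin d)) := by
        ext i
        simp only [Set.mem_setOf_eq, Set.mem_empty_iff_false, iff_false, Nat.sub_zero, not_le]
        exact i.isLt
      rw [this, Set.image_empty, Submodule.span_empty, flag_bot hG]
    | succ k ih =>
      intro hk
      have hkd : d - k - 1 < d := by omega
      have hset : {i : Fin d | d - (k + 1) ≤ (i : ℕ)} =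
          insert (⟨d - k - 1, hkd⟩ : Fin d) {i : Fin d | d - k ≤ (i : ℕ)} := by
        ext i; simp [Fin.ext_iff]; omega
      rw [hset, Set.image_insert_eq, Submodule.span_insert, ← ih (by omega)]
      have := hG1 ⟨d - k - 1, hkd⟩
      simp only [Fin.val_mk] at this
      have e1 : d - (d - k - 1) = k + 1 := by omega
      rw [e1, Nat.add_sub_cancel] at this
      rw [this, sup_comm]
  -- generator of p
  have hpne : p ≠ ⊥ := by
    intro hbot; rw [hbot] at hp; simp at hp
  obtain ⟨w, hw, hw0⟩ := Submodule.exists_mem_ne_zero_of_ne_bot hpne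
  have hpspan : p = Submodule.span ℂ {w} := by
    symm
    apply Submodule.eq_of_le_of_finrank_le
    · rw [Submodule.span_le, Set.singleton_subset_iff]; exact hw
    · rw [hp, finrank_span_singleton hw0]
  -- basis from u
  have huniv : {i : Fin d | (i : ℕ) < d} = (Set.univ : Set (Fin d)) := by
    ext i; simp [i.isLt]
  have hspan_top : ⊤ ≤ Submodule.span ℂ (Set.range u) := by
    rw [← Set.image_univ, ← huniv, ← hFspan d le_rfl, flag_top hF le_rfl]
  have hcard : Fintype.card (Fin d) = finrank ℂ (Fin d → ℂ) := by
    rw [Fintype.card_fin, finrank_fun]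
  set b₀ : Basis (Fin d) ℂ (Fin d → ℂ) := basisOfTopLeSpanOfCardEqFinrank u hspan_top hcard
    with hb₀def
  have hb₀ : ⇑b₀ = u := coe_basisOfTopLeSpanOfCardEqFinrank u hspan_top hcard
  set c : Fin d → ℂ := fun i => b₀.repr w i with hcdef
  have hc : ∀ i, c i ≠ 0 := by
    intro i hci
    have hi : (i : ℕ) < d := i.isLt
    -- w lies in span of the other basis vectors
    have hmem : w ∈ Submodule.span ℂ (u '' {j : Fin d | j ≠ i}) := by
      rw [← hb₀, Basis.mem_span_image]
      intro j hj
      simp only [Finset.coe_sort_coe, Finsupp.mem_support_iff, Finset.mem_coe] at hj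
      simp only [Set.mem_setOf_eq]
      rintro rfl
      exact hj hci
    have hsplit : {j : Fin d | j ≠ i} =
        {j : Fin d | (j : ℕ) < (i : ℕ)} ∪ {j : Fin d | d - (d - (i : ℕ) - 1) ≤ (j : ℕ)} := by
      ext j
      simp only [Set.mem_setOf_eq, Set.mem_union, ne_eq, Fin.ext_iff]
      omega
    rw [hsplit, Set.image_union, Submodule.span_union, ← hFspan (i : ℕ) (le_of_lt hi),
      ← hGspan (d - (i : ℕ) - 1) (by omega)] at hmem
    -- contradiction with the oscillation condition
    have hosc := (hN ((i : ℕ) + 1) (by omega) hi).2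
    have heq : (i : ℕ) + 1 - 1 = (i : ℕ) := by omega
    have heq2 : d - ((i : ℕ) + 1) = d - (i : ℕ) - 1 := by omega
    rw [heq, heq2] at hosc
    have hple : p ≤ F (i : ℕ) ⊔ G (d - (i : ℕ) - 1) := by
      rw [hpspan, Submodule.span_le, Set.singleton_subset_iff]; exact hmem
    have htop : F (i : ℕ) ⊔ G (d - (i : ℕ) - 1) = ⊤ := by
      rw [← hosc]
      exact (sup_eq_left.mpr hple).symm
    have hrk := Submodule.finrank_sup_add_finrank_inf_eq (F (i : ℕ)) (G (d - (i : ℕ) - 1))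
    rw [htop, finrank_top_fun, hF.2 (i : ℕ) (le_of_lt hi), hG.2 (d - (i : ℕ) - 1) (by omega)]
      at hrk
    omega
  set b : Basis (Fin d) ℂ (Fin d → ℂ) := b₀.unitsSMul (fun i => Units.mk0 (c i) (hc i))
    with hbdef
  have hb : ∀ i, b i = c i • u i := by
    intro i
    rw [hbdef, Basis.unitsSMul_apply, hb₀]
    rfl
  have hbspan : ∀ i, Submodule.span ℂ {b i} = Submodule.span ℂ {u i} := by
    intro i
    rw [hb i]
    exact Submodule.span_singleton_smul_eq (IsUnit.mk0 (c i) (hc i)) _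
  have hsum : ∑ i, b i = w := by
    have := b₀.sum_repr w
    rw [hb₀] at this
    calc ∑ i, b i = ∑ i, c i • u i := by simp [hb]
    _ = w := this
  refine ⟨b, ?_, ?_, ?_, ?_⟩
  · intro k hk
    rw [hFspan k hk, span_image_congr ⇑b u (fun i => (hbspan i)) _]
  · intro k hk
    rw [hGspan k hk, span_image_congr ⇑b u (fun i => (hbspan i)) _]
  · rw [hsum, hpspan]
  · intro i
    rw [hbspan i, hspanL i]

lemma unit_equiv {d : ℕ} (v : (Matrix (Fin d) (Fin d) ℂ)ˣ) :
    ∃ e : (Fin d → ℂ) ≃ₗ[ℂ] (Fin d → ℂ),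
      (e : (Fin d → ℂ) →ₗ[ℂ] (Fin d → ℂ)) = (v : Matrix (Fin d) (Fin d) ℂ).mulVecLin := by
  refine ⟨LinearEquiv.ofLinear (v : Matrix (Fin d) (Fin d) ℂ).mulVecLin
    ((↑v⁻¹ : Matrix (Fin d) (Fin d) ℂ)).mulVecLin ?_ ?_, rfl⟩
  · rw [← Matrix.mulVecLin_mul, v.mul_inv, Matrix.mulVecLin_one]
  · rw [← Matrix.mulVecLin_mul, v.inv_mul, Matrix.mulVecLin_one]

lemma isUnit_facts {d : ℕ} {g : Matrix (Fin d) (Fin d) ℂ} (hg : IsUnit g) :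
    (∀ q : Submodule ℂ (Fin d → ℂ), finrank ℂ (q.map g.mulVecLin) = finrank ℂ q) ∧
      Submodule.map g.mulVecLin ⊤ = ⊤ ∧ Function.Injective g.mulVecLin := by
  obtain ⟨v, rfl⟩ := hg
  obtain ⟨e, he⟩ := unit_equiv v
  refine ⟨fun q => ?_, ?_, ?_⟩
  · rw [← he]; exact LinearEquiv.finrank_map_eq e q
  · rw [Submodule.map_top, LinearMap.range_eq_top, ← he]
    exact e.surjective
  · rw [← he]; exact e.injective

lemma flagMap_mul {d : ℕ} (A B : Matrix (Fin d) (Fin d) ℂ) (F : ℕ → Submodule ℂ (Fin d → ℂ)) :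
    flagMap d (A * B) F = flagMap d A (flagMap d B F) := by
  funext k
  simp only [flagMap, Matrix.mulVecLin_mul, Submodule.map_comp]

lemma flagMap_one {d : ℕ} (F : ℕ → Submodule ℂ (Fin d → ℂ)) : flagMap d 1 F = F := by
  funext k
  simp only [flagMap, Matrix.mulVecLin_one, Submodule.map_id]

lemma map_mul_submodule {d : ℕ} (A B : Matrix (Fin d) (Fin d) ℂ) (q : Submodule ℂ (Fin d → ℂ)) :
    Submodule.map (A * B).mulVecLin q = Submodule.map A.mulVecLin (Submodule.map B.mulVecLin q) := by
  rw [Matrix.mulVecLin_mul, Submodule.map_comp]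

lemma stab (d : ℕ) (hd : 1 ≤ d) (g : Matrix (Fin d) (Fin d) ℂ) (hg : IsUnit g)
    (F G : ℕ → Submodule ℂ (Fin d → ℂ)) (p : Submodule ℂ (Fin d → ℂ)) (h : InN d F G p)
    (hFf : flagMap d g F = F) (hGf : flagMap d g G = G)
    (hpf : Submodule.map g.mulVecLin p = p) :
    ∃ c : ℂ, c ≠ 0 ∧ g = c • (1 : Matrix (Fin d) (Fin d) ℂ) := by
  obtain ⟨b, hFs, hGs, hps, hLs⟩ := exists_adapted_basis d F G p h
  have hinj := (isUnit_facts hg).2.2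
  have hfix : ∀ i : Fin d, ∃ ci : ℂ, g.mulVecLin (b i) = ci • b i := by
    intro i
    have hbmem : b i ∈ F ((i : ℕ) + 1) ⊓ G (d - (i : ℕ)) := by
      rw [hLs i]; exact Submodule.mem_span_singleton_self _
    have h1 : g.mulVecLin (b i) ∈ F ((i : ℕ) + 1) := by
      have := congrFun hFf ((i : ℕ) + 1)
      rw [← this]
      exact Submodule.mem_map_of_mem hbmem.1
    have h2 : g.mulVecLin (b i) ∈ G (d - (i : ℕ)) := by
      have := congrFun hGf (d - (i : ℕ))
      rw [← this]
      exact Submodule.mem_map_of_mem hbmem.2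
    have h3 : g.mulVecLin (b i) ∈ Submodule.span ℂ {b i} := by
      rw [← hLs i]; exact ⟨h1, h2⟩
    obtain ⟨ci, hci⟩ := Submodule.mem_span_singleton.mp h3
    exact ⟨ci, hci.symm⟩
  choose cf hcf using hfix
  have hwp : (∑ i, b i) ∈ p := by rw [hps]; exact Submodule.mem_span_singleton_self _
  have hww : g.mulVecLin (∑ i, b i) ∈ Submodule.span ℂ {∑ i, b i} := by
    rw [← hps, ← hpf]
    exact Submodule.mem_map_of_mem hwp
  obtain ⟨cc, hcc⟩ := Submodule.mem_span_singleton.mp hww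
  have hsum : ∑ i, (cf i - cc) • b i = 0 := by
    have h1 : ∑ i, cf i • b i = ∑ i, cc • b i := by
      calc ∑ i, cf i • b i = ∑ i, g.mulVecLin (b i) := by simp [hcf]
      _ = g.mulVecLin (∑ i, b i) := (map_sum g.mulVecLin _ _).symm
      _ = cc • ∑ i, b i := hcc.symm
      _ = ∑ i, cc • b i := Finset.smul_sum
    simp only [sub_smul, Finset.sum_sub_distrib, h1, sub_self]
  have hli := b.linearIndependent
  rw [Fintype.linearIndependent_iff] at hli
  have hceq : ∀ i, cf i = cc := by
    intro i
    exact sub_eq_zero.mp (hli _ hsum i)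
  have hcc0 : cc ≠ 0 := by
    intro h0
    set i0 : Fin d := ⟨0, hd⟩
    have : g.mulVecLin (b i0) = 0 := by rw [hcf i0, hceq i0, h0, zero_smul]
    have hb0 : b i0 = 0 := hinj (by rw [this, map_zero])
    exact b.ne_zero i0 hb0
  refine ⟨cc, hcc0, ?_⟩
  have hmv : ∀ M : Matrix (Fin d) (Fin d) ℂ, Matrix.toLin' M = M.mulVecLin := fun _ => rfl
  apply Matrix.toLin'.injective
  rw [hmv, hmv]
  apply b.ext
  intro i
  rw [hcf i, hceq i]
  have : (cc • (1 : Matrix (Fin d) (Fin d) ℂ)).mulVecLin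
      = cc • (1 : Matrix (Fin d) (Fin d) ℂ).mulVecLin := by
    rw [← hmv, ← hmv, map_smul]
  rw [this, Matrix.mulVecLin_one]
  rfl

lemma trans_lemma (d : ℕ) (F G : ℕ → Submodule ℂ (Fin d → ℂ)) (p : Submodule ℂ (Fin d → ℂ))
    (F' G' : ℕ → Submodule ℂ (Fin d → ℂ)) (p' : Submodule ℂ (Fin d → ℂ))
    (h : InN d F G p) (h' : InN d F' G' p') :
    ∃ g : Matrix (Fin d) (Fin d) ℂ, IsUnit g ∧ flagMap d g F = F' ∧ flagMap d g G = G' ∧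
      Submodule.map g.mulVecLin p = p' := by
  obtain ⟨b, hFs, hGs, hps, _⟩ := exists_adapted_basis d F G p h
  obtain ⟨b', hFs', hGs', hps', _⟩ := exists_adapted_basis d F' G' p' h'
  set e : (Fin d → ℂ) ≃ₗ[ℂ] (Fin d → ℂ) := b.equiv b' (Equiv.refl _) with hedef
  set g : Matrix (Fin d) (Fin d) ℂ :=
    LinearMap.toMatrix' (e : (Fin d → ℂ) →ₗ[ℂ] (Fin d → ℂ)) with hgdef
  have hmv : g.mulVecLin = (e : (Fin d → ℂ) →ₗ[ℂ] (Fin d → ℂ)) := Matrix.toLin'_toMatrix' _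
  have hcomp : (⇑e ∘ ⇑b : Fin d → (Fin d → ℂ)) = ⇑b' := by
    funext i
    simp [hedef]
  have hunit : IsUnit g := by
    set g2 : Matrix (Fin d) (Fin d) ℂ :=
      LinearMap.toMatrix' (e.symm : (Fin d → ℂ) →ₗ[ℂ] (Fin d → ℂ)) with hg2def
    have h1 : g * g2 = 1 := by
      rw [hgdef, hg2def, ← LinearMap.toMatrix'_comp]
      have : (e : (Fin d → ℂ) →ₗ[ℂ] (Fin d → ℂ)).comp
          (e.symm : (Fin d → ℂ) →ₗ[ℂ] (Fin d → ℂ)) = LinearMap.id := by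
        ext x; simp
      rw [this, LinearMap.toMatrix'_id]
    have h2 : g2 * g = 1 := by
      rw [hgdef, hg2def, ← LinearMap.toMatrix'_comp]
      have : (e.symm : (Fin d → ℂ) →ₗ[ℂ] (Fin d → ℂ)).comp
          (e : (Fin d → ℂ) →ₗ[ℂ] (Fin d → ℂ)) = LinearMap.id := by
        ext x; simp
      rw [this, LinearMap.toMatrix'_id]
    exact ⟨⟨g, g2, h1, h2⟩, rfl⟩
  have hei : ∀ i, e (b i) = b' i := fun i => b.equiv_apply i b' (Equiv.refl _)
  have hmap : ∀ S : Set (Fin d),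
      Submodule.map g.mulVecLin (Submodule.span ℂ (⇑b '' S)) = Submodule.span ℂ (⇑b' '' S) := by
    intro S
    rw [hmv, Submodule.map_span, Set.image_image]
    exact congrArg (Submodule.span ℂ) (Set.image_congr' (fun i => hei i) (s := S))
  refine ⟨g, hunit, ?_, ?_, ?_⟩
  · funext k
    by_cases hk : k ≤ d
    · show Submodule.map g.mulVecLin (F k) = F' k
      rw [hFs k hk, hFs' k hk, hmap]
    · show Submodule.map g.mulVecLin (F k) = F' k
      rw [flag_top h.1 (le_of_not_ge hk), flag_top h'.1 (le_of_not_ge hk),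
        (isUnit_facts hunit).2.1]
  · funext k
    by_cases hk : k ≤ d
    · show Submodule.map g.mulVecLin (G k) = G' k
      rw [hGs k hk, hGs' k hk, hmap]
    · show Submodule.map g.mulVecLin (G k) = G' k
      rw [flag_top h.2.1 (le_of_not_ge hk), flag_top h'.2.1 (le_of_not_ge hk),
        (isUnit_facts hunit).2.1]
  · rw [hps, hps', hmv, Submodule.map_span, Set.image_singleton]
    congr 1
    rw [Set.singleton_eq_singleton_iff]
    rw [LinearEquiv.coe_coe, map_sum]
    exact Finset.sum_congr rfl fun i _ => hei i

end Helpers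

theorem statement_0 (d : ℕ) (hd : 1 ≤ d) :
    -- `GL_d(ℂ)` maps `N(ℂ^d)` to itself
    (∀ g : Matrix (Fin d) (Fin d) ℂ, IsUnit g →
      ∀ F G : ℕ → Submodule ℂ (Fin d → ℂ), ∀ p : Submodule ℂ (Fin d → ℂ), InN d F G p →
        InN d (flagMap d g F) (flagMap d g G) (Submodule.map g.mulVecLin p)) ∧
    -- the action is transitive
    (∀ F G : ℕ → Submodule ℂ (Fin d → ℂ), ∀ p : Submodule ℂ (Fin d → ℂ),
      ∀ F' G' : ℕ → Submodule ℂ (Fin d → ℂ), ∀ p' : Submodule ℂ (Fin d → ℂ),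
      InN d F G p → InN d F' G' p' →
        ∃ g : Matrix (Fin d) (Fin d) ℂ, IsUnit g ∧ flagMap d g F = F' ∧ flagMap d g G = G' ∧
          Submodule.map g.mulVecLin p = p') ∧
    -- an element fixing some point of `N(ℂ^d)` is a nonzero scalar multiple of the identity
    (∀ g : Matrix (Fin d) (Fin d) ℂ, IsUnit g →
      ∀ F G : ℕ → Submodule ℂ (Fin d → ℂ), ∀ p : Submodule ℂ (Fin d → ℂ), InN d F G p →
        flagMap d g F = F → flagMap d g G = G → Submodule.map g.mulVecLin p = p →
          ∃ c : ℂ, c ≠ 0 ∧ g = c • (1 : Matrix (Fin d) (Fin d) ℂ)) ∧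
    -- any two elements carrying one point to another differ by a nonzero scalar
    (∀ F G : ℕ → Submodule ℂ (Fin d → ℂ), ∀ p : Submodule ℂ (Fin d → ℂ),
      ∀ F' G' : ℕ → Submodule ℂ (Fin d → ℂ), ∀ p' : Submodule ℂ (Fin d → ℂ),
      InN d F G p → InN d F' G' p' →
      ∀ g g' : Matrix (Fin d) (Fin d) ℂ, IsUnit g → IsUnit g' →
        flagMap d g F = F' → flagMap d g G = G' → Submodule.map g.mulVecLin p = p' →
        flagMap d g' F = F' → flagMap d g' G = G' → Submodule.map g'.mulVecLin p = p' →
          ∃ c : ℂ, c ≠ 0 ∧ g' = c • g) := by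
  refine ⟨?_, ?_, ?_, ?_⟩
  · intro g hg F G p h
    obtain ⟨⟨hFm, hFr⟩, ⟨hGm, hGr⟩, hp, hN⟩ := h
    obtain ⟨hrk, htop, hinj⟩ := isUnit_facts hg
    refine ⟨⟨fun a b hab => Submodule.map_mono (hFm hab), fun k hk => by
        rw [show flagMap d g F k = Submodule.map g.mulVecLin (F k) from rfl, hrk]
        exact hFr k hk⟩,
      ⟨fun a b hab => Submodule.map_mono (hGm hab), fun k hk => by
        rw [show flagMap d g G k = Submodule.map g.mulVecLin (G k) from rfl, hrk]
        exact hGr k hk⟩,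
      by rw [hrk]; exact hp, ?_⟩
    intro k h1 h2
    constructor
    · show Submodule.map g.mulVecLin (F k) ⊔ Submodule.map g.mulVecLin (G (d - k)) = ⊤
      rw [← Submodule.map_sup, (hN k h1 h2).1, htop]
    · show Submodule.map g.mulVecLin (F (k - 1)) ⊔ Submodule.map g.mulVecLin (G (d - k)) ⊔
        Submodule.map g.mulVecLin p = ⊤
      rw [← Submodule.map_sup, ← Submodule.map_sup, (hN k h1 h2).2, htop]
  · intro F G p F' G' p' h h'
    exact trans_lemma d F G p F' G' p' h h'
  · intro g hg F G p h h1 h2 h3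
    exact stab d hd g hg F G p h h1 h2 h3
  · intro F G p F' G' p' h h' g g' hg hg' hgF hgG hgp hg'F hg'G hg'p
    obtain ⟨v, rfl⟩ := hg
    have hvF : flagMap d (↑v⁻¹) F' = F := by
      rw [← hgF, ← flagMap_mul, v.inv_mul, flagMap_one]
    have hvG : flagMap d (↑v⁻¹) G' = G := by
      rw [← hgG, ← flagMap_mul, v.inv_mul, flagMap_one]
    have hvp : Submodule.map ((↑v⁻¹ : Matrix (Fin d) (Fin d) ℂ)).mulVecLin p' = p := by
      rw [← hgp, ← map_mul_submodule, v.inv_mul, Matrix.mulVecLin_one, Submodule.map_id]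
    have hunit : IsUnit (g' * (↑v⁻¹ : Matrix (Fin d) (Fin d) ℂ)) := hg'.mul (Units.isUnit v⁻¹)
    obtain ⟨c, hc0, hc⟩ := stab d hd (g' * (↑v⁻¹ : Matrix (Fin d) (Fin d) ℂ)) hunit F' G' p' h'
      (by rw [flagMap_mul, hvF, hg'F]) (by rw [flagMap_mul, hvG, hg'G])
      (by rw [map_mul_submodule, hvp, hg'p])
    refine ⟨c, hc0, ?_⟩
    have hgv : g' = (g' * (↑v⁻¹ : Matrix (Fin d) (Fin d) ℂ)) * (↑v : Matrix (Fin d) (Fin d) ℂ) := by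
      rw [mul_assoc, v.inv_mul, mul_one]
    rw [hgv, hc, smul_mul_assoc, one_mul]
end
end

section
/- Let d ≥ 3 and let (F1,F2,F3) be a triple of complete flags of ℂ^d in general position. Then every permutation of (F1,F2,F3) is in general position and, for every j = (j1,j2,j3) ∈ B, T^{(j1,j2,j3)}(F1,F2,F3) = T^{(j2,j3,j1)}(F2,F3,F1) = T^{(j3,j1,j2)}(F3,F1,F2) = T^{(j2,j1,j3)}(F2,F1,F3)^{−1}. -/
noncomputable section

/-- A triple of flags of `ℂ^d` in general position:
`F1^k1 + F2^k2 + F3^k3 = ℂ^d` whenever `k1 + k2 + k3 = d`. -/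
def GenPos3 (d : ℕ) (F1 F2 F3 : ℕ → Submodule ℂ (Fin d → ℂ)) : Prop :=
  ∀ k1 k2 k3 : ℕ, k1 + k2 + k3 = d → F1 k1 ⊔ F2 k2 ⊔ F3 k3 = ⊤

/-- The index set `B`: triples of positive integers summing to `d`. -/
def memB (d : ℕ) (j : ℕ × ℕ × ℕ) : Prop :=
  0 < j.1 ∧ 0 < j.2.1 ∧ 0 < j.2.2 ∧ j.1 + j.2.1 + j.2.2 = d

/-- The index set `A`: pairs of positive integers summing to `d`. -/
def memA (d : ℕ) (i : ℕ × ℕ) : Prop :=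
  0 < i.1 ∧ 0 < i.2 ∧ i.1 + i.2 = d

/-- `v 0, v 1, …, v (d-1)` is a basis adapted to the flag `F`: for every `k ≤ d`, the
subspace `F k` is spanned by the first `k` vectors.  A nonzero element `f^k` of the line
`⋀^k F^k` is then given by `v 0 ∧ ⋯ ∧ v (k-1)`. -/
def IsAdaptedBasis (d : ℕ) (F : ℕ → Submodule ℂ (Fin d → ℂ)) (v : ℕ → Fin d → ℂ) : Prop :=
  ∀ k, k ≤ d → F k = Submodule.span ℂ (v '' {m | m < k})

/-- A choice of adapted basis for a flag. -/
noncomputable def flagBasis (d : ℕ) (F : ℕ → Submodule ℂ (Fin d → ℂ)) : ℕ → Fin d → ℂ :=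
  Classical.epsilon (IsAdaptedBasis d F)

/-- The scalar `f1^a ∧ f2^b ∧ f3^(d-a-b)`: the wedge product of the first `a` vectors of
`v1`, the first `b` vectors of `v2` and the first `d - a - b` vectors of `v3`, viewed as a
complex number via the determinant (i.e. via the standard identification `⋀^d ℂ^d ≅ ℂ`). -/
noncomputable def wedgeDet (d a b : ℕ) (v1 v2 v3 : ℕ → Fin d → ℂ) : ℂ :=
  Matrix.det (Matrix.of fun (i j : Fin d) =>
    if (i : ℕ) < a then v1 (i : ℕ) j
    else if (i : ℕ) < a + b then v2 ((i : ℕ) - a) j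
    else v3 ((i : ℕ) - a - b) j)

/-- The triple ratio `T^j(F1,F2,F3)` of a triple of flags in general position,
for `j = (j1,j2,j3)` with `j1 + j2 + j3 = d`. -/
noncomputable def tripleRatio (d : ℕ) (j : ℕ × ℕ × ℕ)
    (F1 F2 F3 : ℕ → Submodule ℂ (Fin d → ℂ)) : ℂ :=
  (wedgeDet d (j.1 + 1) j.2.1 (flagBasis d F1) (flagBasis d F2) (flagBasis d F3) *
      wedgeDet d j.1 (j.2.1 - 1) (flagBasis d F1) (flagBasis d F2) (flagBasis d F3) *
      wedgeDet d (j.1 - 1) (j.2.1 + 1) (flagBasis d F1) (flagBasis d F2) (flagBasis d F3)) /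
    (wedgeDet d (j.1 - 1) j.2.1 (flagBasis d F1) (flagBasis d F2) (flagBasis d F3) *
      wedgeDet d j.1 (j.2.1 + 1) (flagBasis d F1) (flagBasis d F2) (flagBasis d F3) *
      wedgeDet d (j.1 + 1) (j.2.1 - 1) (flagBasis d F1) (flagBasis d F2) (flagBasis d F3))

/-- A choice of nonzero vector in a (1-dimensional) subspace. -/
noncomputable def lineVec (d : ℕ) (l : Submodule ℂ (Fin d → ℂ)) : Fin d → ℂ :=
  Classical.epsilon fun v => v ∈ l ∧ v ≠ 0

/-- The double ratio `D^i(G1,G2,ℓ1,ℓ2)` of a pair of transverse flags and a pair of lines,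
for `i = (i1,i2)` with `i1 + i2 = d`. -/
noncomputable def doubleRatioLine (d : ℕ) (i : ℕ × ℕ) (G1 G2 : ℕ → Submodule ℂ (Fin d → ℂ))
    (l1 l2 : Submodule ℂ (Fin d → ℂ)) : ℂ :=
  -((wedgeDet d i.1 (i.2 - 1) (flagBasis d G1) (flagBasis d G2) (fun _ => lineVec d l1) *
        wedgeDet d (i.1 - 1) i.2 (flagBasis d G1) (flagBasis d G2) (fun _ => lineVec d l2)) /
      (wedgeDet d i.1 (i.2 - 1) (flagBasis d G1) (flagBasis d G2) (fun _ => lineVec d l2) *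
        wedgeDet d (i.1 - 1) i.2 (flagBasis d G1) (flagBasis d G2) (fun _ => lineVec d l1)))

/-- The double ratio `D^i(G1,G2,H1,H2)` of four flags, which only depends on the
`1`-dimensional parts of `H1` and `H2`. -/
noncomputable def doubleRatio (d : ℕ) (i : ℕ × ℕ)
    (G1 G2 H1 H2 : ℕ → Submodule ℂ (Fin d → ℂ)) : ℂ :=
  doubleRatioLine d i G1 G2 (H1 1) (H2 1)

lemma rotPow_val (m a : ℕ) (i : Fin m) :
    (((finRotate m) ^ a) i : ℕ) = ((i : ℕ) + a) % m := by
  cases m with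
  | zero => exact i.elim0
  | succ k =>
    induction a with
    | zero =>
      simp [Nat.mod_eq_of_lt i.isLt]
    | succ n ih =>
      rw [pow_succ', Equiv.Perm.mul_apply, finRotate_succ_apply, Fin.add_def,
        Fin.val_one', ih]
      conv_rhs => rw [← Nat.add_assoc, Nat.add_mod]

lemma wedgeDet_rot (d a b c : ℕ) (h : a + b + c = d) (hd : 0 < d)
    (v1 v2 v3 : ℕ → Fin d → ℂ) :
    wedgeDet d b c v2 v3 v1 = (-1 : ℂ) ^ (a * (d - 1)) * wedgeDet d a b v1 v2 v3 := by
  set σ : Equiv.Perm (Fin d) := (finRotate d) ^ a with hσdef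
  have hσ : ∀ i : Fin d, ((σ i : ℕ)) = ((i : ℕ) + a) % d := fun i => rotPow_val d a i
  have hM : (Matrix.of fun (i j : Fin d) =>
      if (i : ℕ) < b then v2 (i : ℕ) j
      else if (i : ℕ) < b + c then v3 ((i : ℕ) - b) j
      else v1 ((i : ℕ) - b - c) j)
      = (Matrix.of fun (i j : Fin d) =>
      if (i : ℕ) < a then v1 (i : ℕ) j
      else if (i : ℕ) < a + b then v2 ((i : ℕ) - a) j
      else v3 ((i : ℕ) - a - b) j).submatrix σ id := by
    funext i j
    simp only [Matrix.of_apply, Matrix.submatrix_apply, id_eq]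
    rcases lt_or_ge (i : ℕ) b with hk | hk
    · rw [if_pos hk]
      have h1 : ((σ i : ℕ)) = (i : ℕ) + a := by rw [hσ i]; exact Nat.mod_eq_of_lt (by omega)
      rw [if_neg (by omega), if_pos (by omega), h1, Nat.add_sub_cancel]
    · rcases lt_or_ge (i : ℕ) (b + c) with hk2 | hk2
      · rw [if_neg (by omega), if_pos hk2]
        have h1 : ((σ i : ℕ)) = (i : ℕ) + a := by rw [hσ i]; exact Nat.mod_eq_of_lt (by omega)
        rw [if_neg (by omega), if_neg (by omega), h1,
          show (i : ℕ) + a - a - b = (i : ℕ) - b by omega]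
      · rw [if_neg (by omega), if_neg (by omega)]
        have h1 : ((σ i : ℕ)) = (i : ℕ) + a - d := by
          rw [hσ i, Nat.mod_eq_sub_mod (by have := i.isLt; omega)]
          exact Nat.mod_eq_of_lt (by have := i.isLt; omega)
        rw [if_pos (by have := i.isLt; omega), h1,
          show (i : ℕ) + a - d = (i : ℕ) - b - c by omega]
  have hsign : (Equiv.Perm.sign σ : ℂ) = (-1 : ℂ) ^ (a * (d - 1)) := by
    obtain ⟨m, rfl⟩ : ∃ m, d = m + 1 := ⟨d - 1, by omega⟩
    rw [hσdef, map_pow, sign_finRotate]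
    push_cast
    rw [← pow_mul, mul_comm]
  rw [wedgeDet, wedgeDet, hM, Matrix.det_permute, hsign]

lemma wedgeDet_swap (d a b c : ℕ) (h : a + b + c = d)
    (v1 v2 v3 : ℕ → Fin d → ℂ) :
    wedgeDet d b a v2 v1 v3 = (-1 : ℂ) ^ (a * b) * wedgeDet d a b v1 v2 v3 := by
  rcases Nat.eq_zero_or_pos (a + b) with hab | hab
  · have ha : a = 0 := by omega
    have hb : b = 0 := by omega
    subst ha; subst hb
    simp [wedgeDet]
  -- the block-swap permutation
  set e : (Fin (a + b) ⊕ Fin c) ≃ Fin d :=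
    finSumFinEquiv.trans (finCongr (by omega : (a + b) + c = d)) with hedef
  set g : Equiv.Perm (Fin (a + b) ⊕ Fin c) :=
    Equiv.sumCongr ((finRotate (a + b)) ^ a) (Equiv.refl _) with hgdef
  set σ : Equiv.Perm (Fin d) := e.permCongr g with hσdef
  have he1 : ∀ x : Fin (a + b), ((e (Sum.inl x) : ℕ)) = (x : ℕ) := by
    intro x; simp [hedef]
  have he2 : ∀ x : Fin c, ((e (Sum.inr x) : ℕ)) = (a + b) + (x : ℕ) := by
    intro x; simp [hedef]
  have hσ1 : ∀ i : Fin d, (hi : (i : ℕ) < a + b) →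
      ((σ i : ℕ)) = ((i : ℕ) + a) % (a + b) := by
    intro i hi
    have hsymm : e.symm i = Sum.inl ⟨(i : ℕ), hi⟩ := by
      rw [Equiv.symm_apply_eq]
      exact Fin.ext (by rw [he1])
    rw [hσdef, Equiv.permCongr_apply, hsymm, hgdef, Equiv.sumCongr_apply]
    simp only [Sum.map_inl]
    rw [he1, rotPow_val]
  have hσ2 : ∀ i : Fin d, (hi : a + b ≤ (i : ℕ)) → ((σ i : ℕ)) = (i : ℕ) := by
    intro i hi
    have hic : (i : ℕ) - (a + b) < c := by have := i.isLt; omega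
    have hsymm : e.symm i = Sum.inr ⟨(i : ℕ) - (a + b), hic⟩ := by
      rw [Equiv.symm_apply_eq]
      exact Fin.ext (by rw [he2]; simp only [Fin.val_mk]; omega)
    rw [hσdef, Equiv.permCongr_apply, hsymm, hgdef, Equiv.sumCongr_apply]
    simp only [Sum.map_inr, Equiv.refl_apply]
    rw [he2]; simp only [Fin.val_mk]; omega
  have hM : (Matrix.of fun (i j : Fin d) =>
      if (i : ℕ) < b then v2 (i : ℕ) j
      else if (i : ℕ) < b + a then v1 ((i : ℕ) - b) j
      else v3 ((i : ℕ) - b - a) j)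
      = (Matrix.of fun (i j : Fin d) =>
      if (i : ℕ) < a then v1 (i : ℕ) j
      else if (i : ℕ) < a + b then v2 ((i : ℕ) - a) j
      else v3 ((i : ℕ) - a - b) j).submatrix σ id := by
    funext i j
    simp only [Matrix.of_apply, Matrix.submatrix_apply, id_eq]
    rcases lt_or_ge (i : ℕ) b with hk | hk
    · rw [if_pos hk]
      have h1 : ((σ i : ℕ)) = (i : ℕ) + a := by
        rw [hσ1 i (by omega)]; exact Nat.mod_eq_of_lt (by omega)
      rw [if_neg (by omega), if_pos (by omega), h1, Nat.add_sub_cancel]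
    · rcases lt_or_ge (i : ℕ) (b + a) with hk2 | hk2
      · rw [if_neg (by omega), if_pos hk2]
        have h1 : ((σ i : ℕ)) = (i : ℕ) - b := by
          rw [hσ1 i (by omega), Nat.mod_eq_sub_mod (by omega)]
          exact (Nat.mod_eq_of_lt (by omega)).trans (by omega)
        rw [h1, if_pos (by omega)]
      · rw [if_neg (by omega), if_neg (by omega)]
        have h1 : ((σ i : ℕ)) = (i : ℕ) := hσ2 i (by omega)
        rw [h1, if_neg (by omega), if_neg (by omega),
          show (i : ℕ) - a - b = (i : ℕ) - b - a by omega]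
  have haux : ((Equiv.Perm.sign ((finRotate (a + b)) ^ a) : ℤ) : ℂ)
      = (-1 : ℂ) ^ (a * (a + b - 1)) := by
    obtain ⟨m, hab'⟩ : ∃ m, a + b = m + 1 := ⟨a + b - 1, by omega⟩
    subst h
    rw [hab', map_pow, sign_finRotate]
    push_cast
    rw [← pow_mul, mul_comm]
  have hsign : (Equiv.Perm.sign σ : ℂ) = (-1 : ℂ) ^ (a * b) := by
    have hs : Equiv.Perm.sign σ = Equiv.Perm.sign ((finRotate (a + b)) ^ a) := by
      rw [hσdef, Equiv.Perm.sign_permCongr, hgdef, Equiv.Perm.sign_sumCongr,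
        Equiv.Perm.sign_refl, mul_one]
    have hpar : (a * (a + b - 1)) % 2 = (a * b) % 2 := by
      rcases Nat.mod_two_eq_zero_or_one a with ha | ha
      · rw [Nat.mul_mod, ha, Nat.mul_mod a b, ha]; simp
      · rw [Nat.mul_mod, ha, Nat.mul_mod a b, ha]
        have hb : (a + b - 1) % 2 = b % 2 := by omega
        rw [hb]
    rw [hs, haux]
    conv_lhs => rw [← Nat.div_add_mod (a * (a + b - 1)) 2]
    conv_rhs => rw [← Nat.div_add_mod (a * b) 2]
    rw [pow_add, pow_add, pow_mul, pow_mul, neg_one_sq, one_pow, one_pow, hpar]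
  rw [wedgeDet, wedgeDet, hM, Matrix.det_permute, hsign]

lemma cancel_signs (e1 e2 e3 f1 f2 f3 : ℕ) (h : e1 + e2 + e3 = f1 + f2 + f3)
    (x1 x2 x3 y1 y2 y3 : ℂ) :
    ((-1 : ℂ) ^ e1 * x1 * ((-1 : ℂ) ^ e2 * x2) * ((-1 : ℂ) ^ e3 * x3)) /
      ((-1 : ℂ) ^ f1 * y1 * ((-1 : ℂ) ^ f2 * y2) * ((-1 : ℂ) ^ f3 * y3)) =
    (x1 * x2 * x3) / (y1 * y2 * y3) := by
  have h1 : ((-1 : ℂ) ^ e1 * x1 * ((-1 : ℂ) ^ e2 * x2) * ((-1 : ℂ) ^ e3 * x3))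
      = (-1 : ℂ) ^ (e1 + e2 + e3) * (x1 * x2 * x3) := by
    rw [pow_add, pow_add]; ring
  have h2 : ((-1 : ℂ) ^ f1 * y1 * ((-1 : ℂ) ^ f2 * y2) * ((-1 : ℂ) ^ f3 * y3))
      = (-1 : ℂ) ^ (f1 + f2 + f3) * (y1 * y2 * y3) := by
    rw [pow_add, pow_add]; ring
  rw [h1, h2, h, mul_div_mul_left]
  exact pow_ne_zero _ (by norm_num)

lemma tripleRatio_cyc (d j1 j2 j3 : ℕ) (h1 : 0 < j1) (h2 : 0 < j2) (h3 : 0 < j3)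
    (hs : j1 + j2 + j3 = d) (F1 F2 F3 : ℕ → Submodule ℂ (Fin d → ℂ)) :
    tripleRatio d (j1, j2, j3) F1 F2 F3 = tripleRatio d (j2, j3, j1) F2 F3 F1 := by
  have hd : 0 < d := by omega
  set u1 := flagBasis d F1 with hu1
  set u2 := flagBasis d F2 with hu2
  set u3 := flagBasis d F3 with hu3
  simp only [tripleRatio]
  rw [wedgeDet_rot d (j1-1) (j2+1) j3 (by omega) hd u1 u2 u3,
      wedgeDet_rot d (j1+1) j2 (j3-1) (by omega) hd u1 u2 u3,
      wedgeDet_rot d j1 (j2-1) (j3+1) (by omega) hd u1 u2 u3,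
      wedgeDet_rot d (j1+1) (j2-1) j3 (by omega) hd u1 u2 u3,
      wedgeDet_rot d (j1-1) j2 (j3+1) (by omega) hd u1 u2 u3,
      wedgeDet_rot d j1 (j2+1) (j3-1) (by omega) hd u1 u2 u3,
      cancel_signs _ _ _ _ _ _
        (by rw [Nat.add_comm ((j1-1)*(d-1)) ((j1+1)*(d-1))])]
  ring

lemma tripleRatio_swap (d j1 j2 j3 : ℕ) (h1 : 0 < j1) (h2 : 0 < j2) (h3 : 0 < j3)
    (hs : j1 + j2 + j3 = d) (F1 F2 F3 : ℕ → Submodule ℂ (Fin d → ℂ)) :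
    tripleRatio d (j1, j2, j3) F1 F2 F3 = (tripleRatio d (j2, j1, j3) F2 F1 F3)⁻¹ := by
  set u1 := flagBasis d F1 with hu1
  set u2 := flagBasis d F2 with hu2
  set u3 := flagBasis d F3 with hu3
  have hsum : j1*(j2+1) + (j1-1)*j2 + (j1+1)*(j2-1)
      = j1*(j2-1) + (j1+1)*j2 + (j1-1)*(j2+1) := by
    obtain ⟨m, rfl⟩ : ∃ m, j1 = m + 1 := ⟨j1 - 1, by omega⟩
    obtain ⟨n, rfl⟩ : ∃ n, j2 = n + 1 := ⟨j2 - 1, by omega⟩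
    simp only [Nat.add_sub_cancel]
    ring
  have hR : tripleRatio d (j2, j1, j3) F2 F1 F3 =
      (wedgeDet d j1 (j2+1) u1 u2 u3 * wedgeDet d (j1-1) j2 u1 u2 u3 *
        wedgeDet d (j1+1) (j2-1) u1 u2 u3) /
      (wedgeDet d j1 (j2-1) u1 u2 u3 * wedgeDet d (j1+1) j2 u1 u2 u3 *
        wedgeDet d (j1-1) (j2+1) u1 u2 u3) := by
    simp only [tripleRatio]
    rw [wedgeDet_swap d j1 (j2+1) (j3-1) (by omega) u1 u2 u3,
        wedgeDet_swap d (j1-1) j2 (j3+1) (by omega) u1 u2 u3,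
        wedgeDet_swap d (j1+1) (j2-1) j3 (by omega) u1 u2 u3,
        wedgeDet_swap d j1 (j2-1) (j3+1) (by omega) u1 u2 u3,
        wedgeDet_swap d (j1+1) j2 (j3-1) (by omega) u1 u2 u3,
        wedgeDet_swap d (j1-1) (j2+1) j3 (by omega) u1 u2 u3,
        cancel_signs _ _ _ _ _ _ hsum]
  rw [hR, inv_div]
  simp only [tripleRatio]
  ring

set_option maxHeartbeats 1000000 in
theorem statement_3 (d : ℕ) (hd : 3 ≤ d) (F1 F2 F3 : ℕ → Submodule ℂ (Fin d → ℂ))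
    (h1 : IsCompleteFlag d F1) (h2 : IsCompleteFlag d F2) (h3 : IsCompleteFlag d F3)
    (hgen : GenPos3 d F1 F2 F3) (j1 j2 j3 : ℕ) (hj : memB d (j1, j2, j3)) :
    (GenPos3 d F1 F3 F2 ∧ GenPos3 d F2 F1 F3 ∧ GenPos3 d F2 F3 F1 ∧
      GenPos3 d F3 F1 F2 ∧ GenPos3 d F3 F2 F1) ∧
    tripleRatio d (j1, j2, j3) F1 F2 F3 = tripleRatio d (j2, j3, j1) F2 F3 F1 ∧
    tripleRatio d (j1, j2, j3) F1 F2 F3 = tripleRatio d (j3, j1, j2) F3 F1 F2 ∧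
    tripleRatio d (j1, j2, j3) F1 F2 F3 = (tripleRatio d (j2, j1, j3) F2 F1 F3)⁻¹ := by
  have hj' : 0 < j1 ∧ 0 < j2 ∧ 0 < j3 ∧ j1 + j2 + j3 = d := hj
  obtain ⟨hj1, hj2, hj3, hs⟩ := hj'
  refine ⟨⟨?_, ?_, ?_, ?_, ?_⟩, ?_, ?_, ?_⟩
  · intro k1 k2 k3 hk
    have h := hgen k1 k3 k2 (by omega)
    rw [sup_right_comm] at h
    exact h
  · intro k1 k2 k3 hk
    have h := hgen k2 k1 k3 (by omega)
    rw [sup_comm (F1 k2) (F2 k1)] at h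
    exact h
  · intro k1 k2 k3 hk
    have h := hgen k3 k1 k2 (by omega)
    rw [sup_assoc, sup_comm (F1 k3)] at h
    exact h
  · intro k1 k2 k3 hk
    have h := hgen k2 k3 k1 (by omega)
    rw [sup_comm (F1 k2 ⊔ F2 k3) (F3 k1), ← sup_assoc] at h
    exact h
  · intro k1 k2 k3 hk
    have h := hgen k3 k2 k1 (by omega)
    rw [sup_right_comm, sup_comm (F1 k3) (F3 k1), sup_right_comm] at h
    exact h
  · exact tripleRatio_cyc d j1 j2 j3 hj1 hj2 hj3 hs F1 F2 F3
  · exact (tripleRatio_cyc d j1 j2 j3 hj1 hj2 hj3 hs F1 F2 F3).trans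
      (tripleRatio_cyc d j2 j3 j1 hj2 hj3 hj1 (by omega) F2 F3 F1)
  · exact tripleRatio_swap d j1 j2 j3 hj1 hj2 hj3 hs F1 F2 F3
end
end

section
/- Let d ≥ 2 and let (G1,G2,H1,H2) and (G1',G2',H1',H2') be quadruples of complete flags of ℂ^d such that (G1,G2,H_m) and (G1',G2',H_m') are in general position for m = 1,2. Then there exists g ∈ GL_d(ℂ) with g·G1 = G1', g·G2 = G2', g(H1^1) = (H1')^1 and g(H2^1) = (H2')^1 if and only if D^i(G1,G2,H1,H2) = D^i(G1',G2',H1',H2') for every i ∈ A. -/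
noncomputable section

/-!
Choose a basis `f 0, …, f (d-1)` with `f k ∈ G1^(k+1) ∩ G2^(d-k)`; it exists by transversality.
For `a + b = d - 1`, the functional `w ↦ g1^a ∧ g2^b ∧ w` vanishes exactly on `G1^a ⊕ G2^b`,
so it is a nonzero multiple of the `a`-th coordinate in this basis. Hence, writing `x1, x2` for
the coordinates of `h1 ∈ H1^1`, `h2 ∈ H2^1`, the double ratio `D^(k+1, d-k-1)` is
`-(x1 (k+1) * x2 k) / (x2 (k+1) * x1 k)`, and general position makes all coordinates nonzero.
These expressions are visibly `GL_d`-invariant. Conversely, equal double ratios force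
`x2 / x1` and `x2' / x1'` to be proportional, and the diagonal map
`f k ↦ (x1' k / x1 k) • f' k` sends `h1` to `h1'` and `h2` to a multiple of `h2'`.
-/
open Module Submodule

variable {d : ℕ}

lemma Submodule.exists_mem_ne_zero_of_finrank_eq_one {K V : Type*} [DivisionRing K]
    [AddCommGroup V] [Module K V] {l : Submodule K V} (hl : finrank K l = 1) : ∃ h ∈ l, h ≠ 0 :=
  exists_mem_ne_zero_of_ne_bot fun hbot => by rw [hbot, finrank_bot] at hl; exact zero_ne_one hl

lemma Matrix.exists_linearEquiv_of_isUnit {n R : Type*} [Fintype n] [DecidableEq n] [CommRing R]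
    {g : Matrix n n R} (hg : IsUnit g) :
    ∃ e : (n → R) ≃ₗ[R] (n → R), (e : (n → R) →ₗ[R] (n → R)) = g.mulVecLin :=
  ⟨g.toLinearEquiv' hg.invertible, (Matrix.toLinearEquiv'_apply g _).trans (Matrix.toLin'_apply' g)⟩

lemma LinearEquiv.exists_isUnit_mulVecLin_eq {n R : Type*} [Fintype n] [DecidableEq n]
    [CommRing R] (e : (n → R) ≃ₗ[R] (n → R)) :
    ∃ g : Matrix n n R, IsUnit g ∧ g.mulVecLin = e :=
  ⟨LinearMap.toMatrix' e,
    LinearMap.isUnit_toMatrix'_iff.mpr ((Module.End.isUnit_iff _).mpr e.bijective),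
    by rw [← Matrix.toLin'_apply', Matrix.toLin'_toMatrix']⟩

lemma Module.Basis.exists_linearEquiv_apply_eq_smul {ι K V : Type*} [Fintype ι] [Field K]
    [AddCommGroup V] [Module K V] (B B' : Basis ι K V) {c : ι → K} (hc : ∀ j, c j ≠ 0) :
    ∃ e : V ≃ₗ[K] V, (∀ j, e (B j) = c j • B' j) ∧ ∀ h j, B'.repr (e h) j = c j * B.repr h j := by
  let e := B.equiv (B'.unitsSMul fun j => Units.mk0 _ (hc j)) (Equiv.refl ι)
  have he (j : ι) : e (B j) = c j • B' j := by
    rw [Basis.equiv_apply, Equiv.refl_apply, Basis.unitsSMul_apply, Units.smul_mk0]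
  refine ⟨e, he, fun h j => ?_⟩
  have hsum : e h = ∑ i, (c i * B.repr h i) • B' i := by
    conv_lhs => rw [← B.sum_repr h]
    simp only [map_sum, map_smul, he, smul_smul, mul_comm]
  rw [hsum, B'.repr_sum_self]

lemma exists_mul_eq_of_crossRatio_succ_eq {K : Type*} [Field K] {x1 x2 y1 y2 : Fin d → K}
    (hd : 0 < d) (hx1 : ∀ j, x1 j ≠ 0) (hx2 : ∀ j, x2 j ≠ 0) (hy1 : ∀ j, y1 j ≠ 0)
    (hy2 : ∀ j, y2 j ≠ 0)
    (h : ∀ j k : Fin d, (k : ℕ) = j + 1 →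
      x1 k * x2 j / (x2 k * x1 j) = y1 k * y2 j / (y2 k * y1 j)) :
    ∃ c : K, c ≠ 0 ∧ ∀ j, x2 j * (y1 j / x1 j) = c * y2 j := by
  let r (j : Fin d) : K := x2 j * y1 j / (x1 j * y2 j)
  have hr (n : ℕ) (hn : n < d) : r ⟨n, hn⟩ = r ⟨0, hd⟩ := by
    induction n with
    | zero => rfl
    | succ n ih =>
      rw [← ih (by omega)]
      have hstep := h ⟨n, by omega⟩ ⟨n + 1, hn⟩ rfl
      simp only [r]
      field_simp [hx1, hx2, hy1, hy2] at hstep ⊢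
      linear_combination -hstep
  refine ⟨r ⟨0, hd⟩, div_ne_zero (mul_ne_zero (hx2 _) (hy1 _)) (mul_ne_zero (hx1 _) (hy2 _)),
    fun j => ?_⟩
  rw [← hr j j.isLt]
  simp only [r]
  field_simp [hx1, hy2]

section Flags

variable {F : ℕ → Submodule ℂ (Fin d → ℂ)}

lemma IsCompleteFlag.finrank_eq (hF : IsCompleteFlag d F) {k : ℕ} (hk : k ≤ d) :
    finrank ℂ (F k) = k :=
  hF.2 k hk

lemma IsCompleteFlag.eq_bot (hF : IsCompleteFlag d F) : F 0 = ⊥ :=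
  finrank_eq_zero.mp (hF.finrank_eq d.zero_le)

lemma IsCompleteFlag.eq_top (hF : IsCompleteFlag d F) {k : ℕ} (hk : d ≤ k) : F k = ⊤ := by
  have hd : F d = ⊤ := eq_top_of_finrank_eq (by rw [hF.finrank_eq le_rfl, finrank_fin_fun])
  exact top_le_iff.mp (hd ▸ hF.1 hk)

lemma IsCompleteFlag.isAdaptedBasis_of_mem_of_notMem (hF : IsCompleteFlag d F) {v : ℕ → Fin d → ℂ}
    (hv : ∀ k < d, v k ∈ F (k + 1) ∧ v k ∉ F k) : IsAdaptedBasis d F v := by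
  intro k hk
  induction k with
  | zero => simp [hF.eq_bot]
  | succ k ih =>
    have hspan : span ℂ (v '' {m | m < k + 1}) = span ℂ {v k} ⊔ F k := by
      rw [ih (by omega), ← span_insert, ← Set.image_insert_eq]
      congr 2
      ext m
      show m < k + 1 ↔ m = k ∨ m < k
      omega
    have hlt : F k < span ℂ {v k} ⊔ F k :=
      lt_of_le_of_ne le_sup_right fun h =>
        (hv k hk).2 (h ▸ mem_sup_left (mem_span_singleton_self (v k)))
    rw [hspan]
    refine (eq_of_le_of_finrank_le (sup_le ?_ (hF.1 k.le_succ)) ?_).symm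
    · exact span_le.mpr (Set.singleton_subset_iff.mpr (hv k hk).1)
    · have := finrank_lt_finrank_of_lt hlt
      rw [hF.finrank_eq (by omega)] at this
      rw [hF.finrank_eq hk]
      exact this

lemma IsAdaptedBasis.mem {v : ℕ → Fin d → ℂ} (hv : IsAdaptedBasis d F v) {m k : ℕ}
    (hm : m < k) (hk : k ≤ d) : v m ∈ F k := by
  rw [hv k hk]
  exact subset_span ⟨m, hm, rfl⟩

lemma IsAdaptedBasis.span_range_eq_top (hF : IsCompleteFlag d F) {v : ℕ → Fin d → ℂ}
    (hv : IsAdaptedBasis d F v) : span ℂ (Set.range fun j : Fin d => v j) = ⊤ := by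
  rw [← hF.eq_top le_rfl, hv d le_rfl]
  congr 1
  ext w
  exact ⟨fun ⟨j, hj⟩ => ⟨j, j.isLt, hj⟩, fun ⟨m, hm, hw⟩ => ⟨⟨m, hm⟩, hw⟩⟩

lemma IsAdaptedBasis.exists_basis (hF : IsCompleteFlag d F) {v : ℕ → Fin d → ℂ}
    (hv : IsAdaptedBasis d F v) : ∃ B : Basis (Fin d) ℂ (Fin d → ℂ), ∀ j, B j = v j :=
  ⟨basisOfTopLeSpanOfCardEqFinrank _ (hv.span_range_eq_top hF).ge (by simp),
    coe_basisOfTopLeSpanOfCardEqFinrank _ _ _ |> congrFun⟩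

lemma IsAdaptedBasis.isAdaptedBasis_flagBasis {v : ℕ → Fin d → ℂ} (hv : IsAdaptedBasis d F v) :
    IsAdaptedBasis d F (flagBasis d F) :=
  Classical.epsilon_spec ⟨v, hv⟩

end Flags

section Transverse

variable {G1 G2 : ℕ → Submodule ℂ (Fin d → ℂ)}

lemma GenPos3.transverseFlags {H : ℕ → Submodule ℂ (Fin d → ℂ)} (hgen : GenPos3 d G1 G2 H)
    (hH : IsCompleteFlag d H) : TransverseFlags d G1 G2 := fun k hk => by
  simpa [hH.eq_bot] using hgen k (d - k) 0 (by omega)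

lemma TransverseFlags.inf_eq_bot (htr : TransverseFlags d G1 G2) (hG1 : IsCompleteFlag d G1)
    (hG2 : IsCompleteFlag d G2) {k : ℕ} (hk : k ≤ d) : G1 k ⊓ G2 (d - k) = ⊥ := by
  have hsum := finrank_sup_add_finrank_inf_eq (G1 k) (G2 (d - k))
  rw [htr k hk, finrank_top, finrank_fin_fun, hG1.finrank_eq hk,
    hG2.finrank_eq (Nat.sub_le d k)] at hsum
  exact finrank_eq_zero.mp (by omega)

lemma TransverseFlags.exists_adapted_pair (htr : TransverseFlags d G1 G2)
    (hG1 : IsCompleteFlag d G1) (hG2 : IsCompleteFlag d G2) :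
    ∃ f : ℕ → Fin d → ℂ, IsAdaptedBasis d G1 f ∧ IsAdaptedBasis d G2 (fun k => f (d - 1 - k)) := by
  have hne : ∀ k < d, G1 (k + 1) ⊓ G2 (d - k) ≠ ⊥ := by
    intro k hk hbot
    have hsum := finrank_sup_add_finrank_inf_eq (G1 (k + 1)) (G2 (d - k))
    have hle := finrank_le (G1 (k + 1) ⊔ G2 (d - k))
    rw [hbot, finrank_bot, hG1.finrank_eq hk, hG2.finrank_eq (Nat.sub_le d k)] at hsum
    rw [finrank_fin_fun] at hle
    omega
  choose! f hf hf0 using fun k hk => exists_mem_ne_zero_of_ne_bot (hne k hk)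
  refine ⟨f, hG1.isAdaptedBasis_of_mem_of_notMem fun k hk => ⟨(hf k hk).1, fun h => hf0 k hk ?_⟩,
    hG2.isAdaptedBasis_of_mem_of_notMem fun k hk => ⟨?_, fun h => hf0 (d - 1 - k) (by omega) ?_⟩⟩
  · have hmem : f k ∈ G1 k ⊓ G2 (d - k) := ⟨h, (hf k hk).2⟩
    rwa [htr.inf_eq_bot hG1 hG2 hk.le, mem_bot] at hmem
  · simpa [show d - (d - 1 - k) = k + 1 by omega] using (hf (d - 1 - k) (by omega)).2
  · have hmem : f (d - 1 - k) ∈ G1 (d - 1 - k + 1) ⊓ G2 (d - (d - 1 - k + 1)) :=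
      ⟨(hf (d - 1 - k) (by omega)).1, by rwa [show d - (d - 1 - k + 1) = k by omega]⟩
    rwa [htr.inf_eq_bot hG1 hG2 (show d - 1 - k + 1 ≤ d by omega), mem_bot] at hmem

end Transverse

section Wedge

variable {a b : ℕ}

lemma wedgeDet_ne_zero_iff (hab : a + b ≤ d) (v1 v2 v3 : ℕ → Fin d → ℂ) :
    wedgeDet d a b v1 v2 v3 ≠ 0 ↔
      span ℂ (v1 '' {m | m < a}) ⊔ span ℂ (v2 '' {m | m < b}) ⊔
        span ℂ (v3 '' {m | m < d - a - b}) = ⊤ := by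
  set M : Matrix (Fin d) (Fin d) ℂ := Matrix.of fun i j =>
    if (i : ℕ) < a then v1 i j else if (i : ℕ) < a + b then v2 (i - a) j else v3 (i - a - b) j
  have hrow : ∀ i : Fin d, M.row i =
      if (i : ℕ) < a then v1 i else if (i : ℕ) < a + b then v2 (i - a) else v3 (i - a - b) := by
    intro i
    ext j
    simp only [M, Matrix.row_apply, Matrix.of_apply]
    split_ifs <;> rfl
  have hrange : Set.range M.row =
      v1 '' {m | m < a} ∪ v2 '' {m | m < b} ∪ v3 '' {m | m < d - a - b} := by
    ext w
    constructor
    · rintro ⟨i, rfl⟩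
      rw [hrow]
      split_ifs with h1 h2
      · exact Or.inl (Or.inl ⟨i, h1, rfl⟩)
      · exact Or.inl (Or.inr ⟨i - a, show (i : ℕ) - a < b by omega, rfl⟩)
      · exact Or.inr ⟨i - a - b, show (i : ℕ) - a - b < d - a - b by omega, rfl⟩
    · rintro ((⟨m, hm, rfl⟩ | ⟨m, hm, rfl⟩) | ⟨m, hm, rfl⟩) <;>
        change (_ : ℕ) < _ at hm
      · exact ⟨⟨m, by omega⟩, by rw [hrow, if_pos hm]⟩
      · exact ⟨⟨a + m, by omega⟩, by
          rw [hrow, if_neg (by simp), if_pos (by simpa using hm), Nat.add_sub_cancel_left]⟩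
      · exact ⟨⟨a + b + m, by omega⟩, by
          rw [hrow, if_neg (by simp; omega), if_neg (by simp), show a + b + m - a - b = m by omega]⟩
  change M.det ≠ 0 ↔ _
  rw [← isUnit_iff_ne_zero, ← Matrix.isUnit_iff_isUnit_det,
    ← Matrix.linearIndependent_rows_iff_isUnit, linearIndependent_iff_card_eq_finrank_span,
    Set.finrank, hrange, span_union, span_union, eq_top_iff_finrank_eq, finrank_fin_fun,
    Fintype.card_fin, eq_comm]

lemma exists_linearMap_eq_wedgeDet (hab : a + b + 1 = d) (v1 v2 : ℕ → Fin d → ℂ) :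
    ∃ φ : (Fin d → ℂ) →ₗ[ℂ] ℂ, ∀ w, φ w = wedgeDet d a b v1 v2 (fun _ => w) := by
  let M : Fin d → Fin d → ℂ := fun i j =>
    if (i : ℕ) < a then v1 i j else if (i : ℕ) < a + b then v2 (i - a) j else 0
  refine ⟨Matrix.detRowAlternating.toMultilinearMap.toLinearMap M ⟨a + b, by omega⟩, fun w => ?_⟩
  rw [MultilinearMap.toLinearMap_apply]
  refine congrArg Matrix.det (Matrix.ext fun i j => ?_)
  rcases eq_or_ne i ⟨a + b, by omega⟩ with rfl | hi
  · simp
  · have : (i : ℕ) < a + b := by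
      have : (i : ℕ) ≠ a + b := fun h => hi (Fin.ext h)
      omega
    simp [Function.update_of_ne hi, M, this]

end Wedge

section AdaptedPair

variable {G1 G2 : ℕ → Submodule ℂ (Fin d → ℂ)} {v1 v2 f : ℕ → Fin d → ℂ}

lemma IsAdaptedBasis.mem_of_rev (hf : IsAdaptedBasis d G2 (fun k => f (d - 1 - k))) {t k : ℕ}
    (ht : t < d) (htk : d - t ≤ k) (hk : k ≤ d) : f t ∈ G2 k := by
  simpa [show d - 1 - (d - 1 - t) = t by omega] using hf.mem (m := d - 1 - t) (by omega) hk

lemma wedgeDet_const_ne_zero_iff (hv1 : IsAdaptedBasis d G1 v1) (hv2 : IsAdaptedBasis d G2 v2)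
    {a b : ℕ} (hab : a + b + 1 = d) (w : Fin d → ℂ) :
    wedgeDet d a b v1 v2 (fun _ => w) ≠ 0 ↔ G1 a ⊔ G2 b ⊔ span ℂ {w} = ⊤ := by
  rw [wedgeDet_ne_zero_iff (by omega), ← hv1 a (by omega), ← hv2 b (by omega),
    Set.Nonempty.image_const ⟨0, show 0 < d - a - b by omega⟩]

lemma wedgeDet_const_eq_zero_of_mem (hG1 : IsCompleteFlag d G1) (hG2 : IsCompleteFlag d G2)
    (hv1 : IsAdaptedBasis d G1 v1) (hv2 : IsAdaptedBasis d G2 v2) (j : Fin d) {w : Fin d → ℂ}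
    (hw : w ∈ G1 j ⊔ G2 (d - 1 - j)) : wedgeDet d j (d - 1 - j) v1 v2 (fun _ => w) = 0 := by
  rw [← not_ne_iff, wedgeDet_const_ne_zero_iff hv1 hv2 (by omega),
    sup_eq_left.mpr (span_le.mpr (Set.singleton_subset_iff.mpr hw))]
  intro h
  have := finrank_add_le_finrank_add_finrank (G1 j) (G2 (d - 1 - j))
  rw [h, finrank_top, finrank_fin_fun, hG1.finrank_eq j.isLt.le, hG2.finrank_eq (by omega)] at this
  omega

lemma wedgeDet_const_apply_ne_zero (hG1 : IsCompleteFlag d G1) (hv1 : IsAdaptedBasis d G1 v1)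
    (hv2 : IsAdaptedBasis d G2 v2) (hf1 : IsAdaptedBasis d G1 f)
    (hf2 : IsAdaptedBasis d G2 (fun k => f (d - 1 - k))) (j : Fin d) :
    wedgeDet d j (d - 1 - j) v1 v2 (fun _ => f j) ≠ 0 := by
  rw [wedgeDet_const_ne_zero_iff hv1 hv2 (by omega), eq_top_iff, ← hf1.span_range_eq_top hG1,
    span_le]
  rintro _ ⟨t, rfl⟩
  rcases lt_trichotomy t j with h | rfl | h
  · exact mem_sup_left (mem_sup_left (hf1.mem h j.isLt.le))
  · exact mem_sup_right (mem_span_singleton_self _)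
  · exact mem_sup_left (mem_sup_right (hf2.mem_of_rev t.isLt (by omega) (by omega)))

lemma wedgeDet_const_eq_repr_mul (hG1 : IsCompleteFlag d G1) (hG2 : IsCompleteFlag d G2)
    (hv1 : IsAdaptedBasis d G1 v1) (hv2 : IsAdaptedBasis d G2 v2) (hf1 : IsAdaptedBasis d G1 f)
    (hf2 : IsAdaptedBasis d G2 (fun k => f (d - 1 - k))) {B : Basis (Fin d) ℂ (Fin d → ℂ)}
    (hB : ∀ j, B j = f j) (j : Fin d) (w : Fin d → ℂ) :
    wedgeDet d j (d - 1 - j) v1 v2 (fun _ => w) =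
      B.repr w j * wedgeDet d j (d - 1 - j) v1 v2 (fun _ => f j) := by
  obtain ⟨φ, hφ⟩ := exists_linearMap_eq_wedgeDet (a := j) (b := d - 1 - j) (by omega) v1 v2
  rw [← hφ, ← hφ, ← hB]
  conv_lhs => rw [← B.sum_repr w, map_sum]
  rw [Finset.sum_eq_single j (fun t _ htj => ?_) (by simp), map_smul, smul_eq_mul]
  rw [map_smul, hφ, hB, wedgeDet_const_eq_zero_of_mem hG1 hG2 hv1 hv2 j ?_, smul_zero]
  rcases lt_or_gt_of_ne htj with h | h
  · exact mem_sup_left (hf1.mem h j.isLt.le)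
  · exact mem_sup_right (hf2.mem_of_rev t.isLt (by omega) (by omega))

lemma GenPos3.repr_ne_zero {H : ℕ → Submodule ℂ (Fin d → ℂ)} (hgen : GenPos3 d G1 G2 H)
    (hG1 : IsCompleteFlag d G1) (hG2 : IsCompleteFlag d G2) (hH : IsCompleteFlag d H)
    (hf1 : IsAdaptedBasis d G1 f) (hf2 : IsAdaptedBasis d G2 (fun k => f (d - 1 - k)))
    {B : Basis (Fin d) ℂ (Fin d → ℂ)} (hB : ∀ j, B j = f j) {h : Fin d → ℂ} (hh : h ∈ H 1)
    (h0 : h ≠ 0) (j : Fin d) : B.repr h j ≠ 0 := by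
  intro hj
  have hW := wedgeDet_const_eq_repr_mul hG1 hG2 hf1 hf2 hf1 hf2 hB j h
  rw [hj, zero_mul] at hW
  refine (wedgeDet_const_ne_zero_iff hf1 hf2 (by omega) _).mpr ?_ hW
  rw [← eq_span_singleton_of_mem_of_finrank_eq_one (hH.finrank_eq j.pos) hh h0]
  exact hgen j (d - 1 - j) 1 (by omega)

end AdaptedPair

section DoubleRatio

variable {G1 G2 : ℕ → Submodule ℂ (Fin d → ℂ)} {f : ℕ → Fin d → ℂ}
  {l1 l2 : Submodule ℂ (Fin d → ℂ)}

lemma exists_lineVec_eq_smul {l : Submodule ℂ (Fin d → ℂ)} (hl : finrank ℂ l = 1)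
    {h : Fin d → ℂ} (hh : h ∈ l) (h0 : h ≠ 0) : ∃ μ : ℂ, μ ≠ 0 ∧ lineVec d l = μ • h := by
  have hspec : lineVec d l ∈ l ∧ lineVec d l ≠ 0 :=
    Classical.epsilon_spec (p := fun v => v ∈ l ∧ v ≠ 0) ⟨h, hh, h0⟩
  have hmem : lineVec d l ∈ span ℂ {h} := by
    rw [← eq_span_singleton_of_mem_of_finrank_eq_one hl hh h0]
    exact hspec.1
  obtain ⟨μ, hμ⟩ := mem_span_singleton.mp hmem
  exact ⟨μ, by rintro rfl; exact hspec.2 (by rw [← hμ, zero_smul]), hμ.symm⟩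

lemma doubleRatioLine_eq (hG1 : IsCompleteFlag d G1) (hG2 : IsCompleteFlag d G2)
    (hf1 : IsAdaptedBasis d G1 f) (hf2 : IsAdaptedBasis d G2 (fun k => f (d - 1 - k)))
    {B : Basis (Fin d) ℂ (Fin d → ℂ)} (hB : ∀ j, B j = f j)
    (hl1 : finrank ℂ l1 = 1) (hl2 : finrank ℂ l2 = 1) {h1 h2 : Fin d → ℂ}
    (hh1 : h1 ∈ l1) (h10 : h1 ≠ 0) (hh2 : h2 ∈ l2) (h20 : h2 ≠ 0)
    {j k : Fin d} (hjk : (k : ℕ) = j + 1) :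
    doubleRatioLine d (k, d - k) G1 G2 l1 l2 =
      -(B.repr h1 k * B.repr h2 j / (B.repr h2 k * B.repr h1 j)) := by
  obtain ⟨μ1, hμ1, e1⟩ := exists_lineVec_eq_smul hl1 hh1 h10
  obtain ⟨μ2, hμ2, e2⟩ := exists_lineVec_eq_smul hl2 hh2 h20
  have hv1 := hf1.isAdaptedBasis_flagBasis
  have hv2 := hf2.isAdaptedBasis_flagBasis
  let W (i : Fin d) (w : Fin d → ℂ) : ℂ :=
    wedgeDet d i (d - 1 - i) (flagBasis d G1) (flagBasis d G2) (fun _ => w)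
  have hW (i : Fin d) (μ : ℂ) (h : Fin d → ℂ) : W i (μ • h) = μ * B.repr h i * W i (f i) := by
    simp only [W]
    rw [wedgeDet_const_eq_repr_mul hG1 hG2 hv1 hv2 hf1 hf2 hB, map_smul, Finsupp.smul_apply,
      smul_eq_mul]
  have hWk : W k (f k) ≠ 0 := wedgeDet_const_apply_ne_zero hG1 hv1 hv2 hf1 hf2 k
  have hWj : W j (f j) ≠ 0 := wedgeDet_const_apply_ne_zero hG1 hv1 hv2 hf1 hf2 j
  have hdr : doubleRatioLine d (k, d - k) G1 G2 l1 l2 =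
      -(W k (lineVec d l1) * W j (lineVec d l2) / (W k (lineVec d l2) * W j (lineVec d l1))) := by
    simp only [doubleRatioLine, W]
    rw [show d - k - 1 = d - 1 - k by omega, show d - (k : ℕ) = d - 1 - j by omega,
      show (k : ℕ) - 1 = j by omega]
  have hK : μ1 * μ2 * W k (f k) * W j (f j) ≠ 0 :=
    mul_ne_zero (mul_ne_zero (mul_ne_zero hμ1 hμ2) hWk) hWj
  rw [hdr, e1, e2, hW, hW, hW, hW,
    show μ1 * B.repr h1 k * W k (f k) * (μ2 * B.repr h2 j * W j (f j)) =
      μ1 * μ2 * W k (f k) * W j (f j) * (B.repr h1 k * B.repr h2 j) by ring,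
    show μ2 * B.repr h2 k * W k (f k) * (μ1 * B.repr h1 j * W j (f j)) =
      μ1 * μ2 * W k (f k) * W j (f j) * (B.repr h2 k * B.repr h1 j) by ring,
    mul_div_mul_left _ _ hK]

end DoubleRatio

section LinearEquiv

variable (e : (Fin d → ℂ) ≃ₗ[ℂ] (Fin d → ℂ)) {F F' : ℕ → Submodule ℂ (Fin d → ℂ)}
  {v v' : ℕ → Fin d → ℂ}

lemma IsCompleteFlag.map (hF : IsCompleteFlag d F) :
    IsCompleteFlag d fun k => (F k).map (e : (Fin d → ℂ) →ₗ[ℂ] (Fin d → ℂ)) :=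
  ⟨fun _ _ h => map_mono (hF.1 h), fun k hk => by rw [e.finrank_map_eq, hF.finrank_eq hk]⟩

lemma IsAdaptedBasis.map (hv : IsAdaptedBasis d F v) :
    IsAdaptedBasis d (fun k => (F k).map (e : (Fin d → ℂ) →ₗ[ℂ] (Fin d → ℂ))) (fun k => e (v k)) :=
  fun k hk => by
    dsimp only
    rw [hv k hk, map_span, ← Set.image_comp]
    rfl

lemma IsAdaptedBasis.map_eq_of_apply_eq_smul (hF : IsCompleteFlag d F)
    (hF' : IsCompleteFlag d F') (hv : IsAdaptedBasis d F v) (hv' : IsAdaptedBasis d F' v')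
    (he : ∀ k < d, ∃ c : ℂ, c ≠ 0 ∧ e (v k) = c • v' k) (k : ℕ) :
    (F k).map (e : (Fin d → ℂ) →ₗ[ℂ] (Fin d → ℂ)) = F' k := by
  rcases le_or_gt k d with hk | hk
  · rw [hv k hk, hv' k hk, map_span, ← Set.image_comp]
    apply le_antisymm <;> rw [span_le] <;> rintro _ ⟨m, hm, rfl⟩ <;>
      obtain ⟨c, hc, hcm⟩ := he m (lt_of_lt_of_le hm hk)
    · rw [Function.comp_apply, LinearEquiv.coe_coe, hcm]
      exact smul_mem _ _ (subset_span ⟨m, hm, rfl⟩)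
    · rw [show v' m = c⁻¹ • e (v m) by rw [hcm, smul_smul, inv_mul_cancel₀ hc, one_smul]]
      exact smul_mem _ _ (subset_span ⟨m, hm, rfl⟩)
  · rw [hF.eq_top hk.le, hF'.eq_top hk.le, Submodule.map_top, LinearEquiv.range]

lemma map_eq_of_apply_eq_smul {l l' : Submodule ℂ (Fin d → ℂ)} (hl : finrank ℂ l = 1)
    (hl' : finrank ℂ l' = 1) {h h' : Fin d → ℂ} (hh : h ∈ l) (h0 : h ≠ 0) (hh' : h' ∈ l')
    (h0' : h' ≠ 0) {c : ℂ} (hc : c ≠ 0) (he : e h = c • h') :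
    l.map (e : (Fin d → ℂ) →ₗ[ℂ] (Fin d → ℂ)) = l' := by
  rw [eq_span_singleton_of_mem_of_finrank_eq_one hl hh h0,
    eq_span_singleton_of_mem_of_finrank_eq_one hl' hh' h0', map_span, Set.image_singleton,
    LinearEquiv.coe_coe, he, span_singleton_smul_eq hc.isUnit]

end LinearEquiv

section Classification

variable {G1 G2 G1' G2' : ℕ → Submodule ℂ (Fin d → ℂ)}

lemma doubleRatioLine_map (e : (Fin d → ℂ) ≃ₗ[ℂ] (Fin d → ℂ)) (hG1 : IsCompleteFlag d G1)
    (hG2 : IsCompleteFlag d G2) (htr : TransverseFlags d G1 G2)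
    {l1 l2 : Submodule ℂ (Fin d → ℂ)} (hl1 : finrank ℂ l1 = 1) (hl2 : finrank ℂ l2 = 1)
    {i : ℕ × ℕ} (hi : memA d i) :
    doubleRatioLine d i (fun k => (G1 k).map (e : (Fin d → ℂ) →ₗ[ℂ] (Fin d → ℂ)))
        (fun k => (G2 k).map (e : (Fin d → ℂ) →ₗ[ℂ] (Fin d → ℂ)))
        (l1.map (e : (Fin d → ℂ) →ₗ[ℂ] (Fin d → ℂ))) (l2.map (e : (Fin d → ℂ) →ₗ[ℂ] (Fin d → ℂ))) =
      doubleRatioLine d i G1 G2 l1 l2 := by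
  obtain ⟨f, hf1, hf2⟩ := htr.exists_adapted_pair hG1 hG2
  obtain ⟨B, hB⟩ := hf1.exists_basis hG1
  obtain ⟨h1, hh1, h10⟩ := exists_mem_ne_zero_of_finrank_eq_one hl1
  obtain ⟨h2, hh2, h20⟩ := exists_mem_ne_zero_of_finrank_eq_one hl2
  obtain ⟨i1, i2⟩ := i
  obtain ⟨hi1, hi2, hi⟩ := hi
  obtain rfl : i2 = d - i1 := by dsimp only at hi; omega
  have hjk : ((⟨i1, by omega⟩ : Fin d) : ℕ) = (⟨i1 - 1, by omega⟩ : Fin d) + 1 := by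
    dsimp only; omega
  have hBe (j : Fin d) : B.map e j = e (f j) := by rw [Basis.map_apply, hB]
  have hrepr (h : Fin d → ℂ) : (B.map e).repr (e h) = B.repr h := by simp
  have himage := doubleRatioLine_eq (hG1.map e) (hG2.map e) (hf1.map e) (hf2.map e) hBe
    (by rwa [e.finrank_map_eq]) (by rwa [e.finrank_map_eq]) (mem_map_of_mem hh1)
    (e.map_ne_zero_iff.mpr h10) (mem_map_of_mem hh2) (e.map_ne_zero_iff.mpr h20) hjk
  simp only [LinearEquiv.coe_coe, hrepr] at himage
  exact himage.trans (doubleRatioLine_eq hG1 hG2 hf1 hf2 hB hl1 hl2 hh1 h10 hh2 h20 hjk).symm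

lemma exists_linearEquiv_of_doubleRatio_eq (hd : 2 ≤ d)
    {H1 H2 H1' H2' : ℕ → Submodule ℂ (Fin d → ℂ)}
    (hG1 : IsCompleteFlag d G1) (hG2 : IsCompleteFlag d G2)
    (hH1 : IsCompleteFlag d H1) (hH2 : IsCompleteFlag d H2)
    (hG1' : IsCompleteFlag d G1') (hG2' : IsCompleteFlag d G2')
    (hH1' : IsCompleteFlag d H1') (hH2' : IsCompleteFlag d H2')
    (hgen1 : GenPos3 d G1 G2 H1) (hgen2 : GenPos3 d G1 G2 H2)
    (hgen1' : GenPos3 d G1' G2' H1') (hgen2' : GenPos3 d G1' G2' H2')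
    (hD : ∀ i, memA d i → doubleRatio d i G1 G2 H1 H2 = doubleRatio d i G1' G2' H1' H2') :
    ∃ e : (Fin d → ℂ) ≃ₗ[ℂ] (Fin d → ℂ),
      (∀ k, (G1 k).map (e : (Fin d → ℂ) →ₗ[ℂ] (Fin d → ℂ)) = G1' k) ∧
      (∀ k, (G2 k).map (e : (Fin d → ℂ) →ₗ[ℂ] (Fin d → ℂ)) = G2' k) ∧
      (H1 1).map (e : (Fin d → ℂ) →ₗ[ℂ] (Fin d → ℂ)) = H1' 1 ∧
      (H2 1).map (e : (Fin d → ℂ) →ₗ[ℂ] (Fin d → ℂ)) = H2' 1 := by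
  have hl {H : ℕ → Submodule ℂ (Fin d → ℂ)} (hH : IsCompleteFlag d H) : finrank ℂ (H 1) = 1 :=
    hH.finrank_eq (by omega)
  obtain ⟨f, hf1, hf2⟩ := (hgen1.transverseFlags hH1).exists_adapted_pair hG1 hG2
  obtain ⟨f', hf1', hf2'⟩ := (hgen1'.transverseFlags hH1').exists_adapted_pair hG1' hG2'
  obtain ⟨B, hB⟩ := hf1.exists_basis hG1
  obtain ⟨B', hB'⟩ := hf1'.exists_basis hG1'
  obtain ⟨h1, hh1, h10⟩ := exists_mem_ne_zero_of_finrank_eq_one (hl hH1)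
  obtain ⟨h2, hh2, h20⟩ := exists_mem_ne_zero_of_finrank_eq_one (hl hH2)
  obtain ⟨h1', hh1', h10'⟩ := exists_mem_ne_zero_of_finrank_eq_one (hl hH1')
  obtain ⟨h2', hh2', h20'⟩ := exists_mem_ne_zero_of_finrank_eq_one (hl hH2')
  have hx1 := hgen1.repr_ne_zero hG1 hG2 hH1 hf1 hf2 hB hh1 h10
  have hy1 := hgen1'.repr_ne_zero hG1' hG2' hH1' hf1' hf2' hB' hh1' h10'
  obtain ⟨c, hc, hratio⟩ := exists_mul_eq_of_crossRatio_succ_eq (by omega) hx1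
    (hgen2.repr_ne_zero hG1 hG2 hH2 hf1 hf2 hB hh2 h20) hy1
    (hgen2'.repr_ne_zero hG1' hG2' hH2' hf1' hf2' hB' hh2' h20') fun j k hjk => by
      have hDk := hD (k, d - k) ⟨by omega, by omega, by omega⟩
      rwa [doubleRatio, doubleRatio,
        doubleRatioLine_eq hG1 hG2 hf1 hf2 hB (hl hH1) (hl hH2) hh1 h10 hh2 h20 hjk,
        doubleRatioLine_eq hG1' hG2' hf1' hf2' hB' (hl hH1') (hl hH2') hh1' h10' hh2' h20' hjk,
        neg_inj] at hDk
  obtain ⟨e, he, hrepr⟩ := B.exists_linearEquiv_apply_eq_smul B'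
    (c := fun j => B'.repr h1' j / B.repr h1 j) fun j => div_ne_zero (hy1 j) (hx1 j)
  have hef (k : ℕ) (hk : k < d) : ∃ c : ℂ, c ≠ 0 ∧ e (f k) = c • f' k :=
    ⟨_, div_ne_zero (hy1 ⟨k, hk⟩) (hx1 ⟨k, hk⟩), by rw [← hB ⟨k, hk⟩, he, hB']⟩
  refine ⟨e, hf1.map_eq_of_apply_eq_smul e hG1 hG1' hf1' hef,
    hf2.map_eq_of_apply_eq_smul e hG2 hG2' hf2' fun k hk => hef (d - 1 - k) (by omega),
    map_eq_of_apply_eq_smul e (hl hH1) (hl hH1') hh1 h10 hh1' h10' one_ne_zero ?_,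
    map_eq_of_apply_eq_smul e (hl hH2) (hl hH2') hh2 h20 hh2' h20' hc ?_⟩
  · refine B'.ext_elem fun j => ?_
    rw [hrepr, one_smul, div_mul_cancel₀ _ (hx1 j)]
  · refine B'.ext_elem fun j => ?_
    rw [hrepr, map_smul, Finsupp.smul_apply, smul_eq_mul, ← hratio j, mul_comm]

end Classification

theorem statement_6 (d : ℕ) (hd : 2 ≤ d)
    (G1 G2 H1 H2 G1' G2' H1' H2' : ℕ → Submodule ℂ (Fin d → ℂ))
    (hG1 : IsCompleteFlag d G1) (hG2 : IsCompleteFlag d G2)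
    (hH1 : IsCompleteFlag d H1) (hH2 : IsCompleteFlag d H2)
    (hG1' : IsCompleteFlag d G1') (hG2' : IsCompleteFlag d G2')
    (hH1' : IsCompleteFlag d H1') (hH2' : IsCompleteFlag d H2')
    (hgen1 : GenPos3 d G1 G2 H1) (hgen2 : GenPos3 d G1 G2 H2)
    (hgen1' : GenPos3 d G1' G2' H1') (hgen2' : GenPos3 d G1' G2' H2') :
    (∃ g : Matrix (Fin d) (Fin d) ℂ, IsUnit g ∧
        flagMap d g G1 = G1' ∧ flagMap d g G2 = G2' ∧
        Submodule.map g.mulVecLin (H1 1) = H1' 1 ∧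
        Submodule.map g.mulVecLin (H2 1) = H2' 1) ↔
      ∀ i : ℕ × ℕ, memA d i →
        doubleRatio d i G1 G2 H1 H2 = doubleRatio d i G1' G2' H1' H2' := by
  constructor
  · rintro ⟨g, hg, rfl, rfl, hgH1, hgH2⟩ i hi
    obtain ⟨e, he⟩ := Matrix.exists_linearEquiv_of_isUnit hg
    unfold doubleRatio flagMap
    rw [← hgH1, ← hgH2, ← he]
    exact (doubleRatioLine_map e hG1 hG2 (hgen1.transverseFlags hH1) (hH1.finrank_eq (by omega))
      (hH2.finrank_eq (by omega)) hi).symm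
  · intro hD
    obtain ⟨e, hG1e, hG2e, hH1e, hH2e⟩ := exists_linearEquiv_of_doubleRatio_eq hd hG1 hG2 hH1 hH2
      hG1' hG2' hH1' hH2' hgen1 hgen2 hgen1' hgen2' hD
    obtain ⟨g, hg, he⟩ := e.exists_isUnit_mulVecLin_eq
    refine ⟨g, hg, ?_⟩
    unfold flagMap
    rw [he]
    exact ⟨funext hG1e, funext hG2e, hH1e, hH2e⟩
end
end

section
/- Let d ≥ 2, let E1, E2 be transverse complete flags of ℂ^d, let i = (i1,i2) ∈ A, and let z be a nonzero complex number. Since ℂ^d = E1^{i1} ⊕ E2^{i2}, let c ∈ GL_d(ℂ) be the linear map acting as multiplication by z on E1^{i1} and as the identity on E2^{i2}. Then c preserves both flags E1 and E2, and for all complete flags F and G such that (E1,E2,F) and (E1,E2,G) are in general position: the triple (E1,E2,c·G) is in general position, D^i(E1,E2,F,c·G) = z·D^i(E1,E2,F,G), and D^k(E1,E2,F,c·G) = D^k(E1,E2,F,G) for every k ∈ A with k ≠ i. -/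
noncomputable section

/-! With `ℂ^d = E1^i1 ⊕ E2^i2`, the map `c` acts by `z` on the first summand and trivially on the
second, so it preserves every subspace containing or contained in one of them, in particular all
`E1^k` and `E2^k`; as `c` is invertible, it also preserves general position.

For `a + b = d - 1`, the map `x ↦ e1^a ∧ e2^b ∧ x` is a linear form vanishing on `E1^a` and on
`E2^b`. If `i1 ≤ a` it kills `E1^i1` and is therefore unchanged by `c`; if `i2 ≤ b` it kills
`E2^i2` and is therefore multiplied by `z`. In `D^k(E1, E2, F, c·G)` the two factors involving `G`
have `(a, b) = (k1, k2 - 1)` and `(k1 - 1, k2)`: for `k = i` they are scaled by `1` and `z`, for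
`k1 < i1` both by `z`, for `k1 > i1` both by `1`. -/

section LinearAlgebra

variable {K V : Type*} [Field K] [AddCommGroup V] [Module K V]

lemma Submodule.map_eq_self_of_forall_eq_smul {S : Submodule K V} {f : V →ₗ[K] V} {a : K}
    (ha : a ≠ 0) (hf : ∀ v ∈ S, f v = a • v) : S.map f = S := by
  refine le_antisymm (Submodule.map_le_iff_le_comap.2 fun v hv => ?_) fun v hv => ?_
  · simpa [hf v hv] using S.smul_mem a hv
  · refine ⟨a⁻¹ • v, S.smul_mem _ hv, ?_⟩
    rw [hf _ (S.smul_mem _ hv), smul_smul, mul_inv_cancel₀ ha, one_smul]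

lemma Submodule.map_eq_self_of_le_or_ge {p q S : Submodule K V} (hpq : p ⊔ q = ⊤)
    {f : V →ₗ[K] V} {a b : K} (ha : a ≠ 0) (hb : b ≠ 0) (hp : ∀ v ∈ p, f v = a • v)
    (hq : ∀ v ∈ q, f v = b • v) (hS : S ≤ p ∨ p ≤ S) : S.map f = S := by
  rcases hS with hS | hS
  · exact Submodule.map_eq_self_of_forall_eq_smul ha fun v hv => hp v (hS hv)
  · have hdec : S = p ⊔ (q ⊓ S) := by rw [← sup_inf_assoc_of_le _ hS, hpq, top_inf_eq]
    rw [hdec, Submodule.map_sup, Submodule.map_eq_self_of_forall_eq_smul ha hp,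
      Submodule.map_eq_self_of_forall_eq_smul hb fun v hv => hq v (Submodule.mem_inf.1 hv).1]

lemma LinearMap.apply_apply_eq_mul_of_le_ker {p q : Submodule K V} (hpq : p ⊔ q = ⊤)
    {f : V →ₗ[K] V} {a b : K} (hp : ∀ v ∈ p, f v = a • v) (hq : ∀ v ∈ q, f v = b • v)
    {φ : V →ₗ[K] K} (hφ : q ≤ LinearMap.ker φ) (x : V) : φ (f x) = a * φ x := by
  obtain ⟨y, hy, w, hw, rfl⟩ := Submodule.mem_sup.1 (hpq ▸ Submodule.mem_top : x ∈ p ⊔ q)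
  simp [hp y hy, hq w hw, LinearMap.mem_ker.1 (hφ hw)]

end LinearAlgebra

lemma Matrix.exists_isUnit_mulVec_eq_smul {n K : Type*} [Fintype n] [DecidableEq n] [Field K]
    {p q : Submodule K (n → K)} (h : IsCompl p q) {z : K} (hz : z ≠ 0) :
    ∃ c : Matrix n n K, IsUnit c ∧ (∀ v ∈ p, c.mulVec v = z • v) ∧ ∀ v ∈ q, c.mulVec v = v := by
  set f := LinearMap.ofIsCompl h (z • p.subtype) q.subtype
  have hp : ∀ v ∈ p, f v = z • v := fun v hv => LinearMap.ofIsCompl_apply_left h ⟨v, hv⟩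
  have hq : ∀ v ∈ q, f v = v := fun v hv => LinearMap.ofIsCompl_apply_right h ⟨v, hv⟩
  have hsurj : Function.Surjective f := by
    refine LinearMap.range_eq_top.1 (eq_top_iff.2 (h.sup_eq_top ▸ sup_le ?_ ?_))
    · intro v hv
      refine ⟨z⁻¹ • v, ?_⟩
      rw [hp _ (p.smul_mem _ hv), smul_smul, mul_inv_cancel₀ hz, one_smul]
    · exact fun v hv => ⟨v, hq v hv⟩
  have hc : (LinearMap.toMatrix' f).mulVec = f := funext (LinearMap.toMatrix'_mulVec f)
  exact ⟨_, Matrix.mulVec_surjective_iff_isUnit.1 (hc ▸ hsurj), hc ▸ hp, hc ▸ hq⟩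

lemma GenPos3.flagMap {d : ℕ} {F1 F2 F3 : ℕ → Submodule ℂ (Fin d → ℂ)}
    {g : Matrix (Fin d) (Fin d) ℂ} (hg : Function.Surjective g.mulVecLin)
    (h : GenPos3 d F1 F2 F3) : GenPos3 d (flagMap d g F1) (flagMap d g F2) (flagMap d g F3) := by
  intro k1 k2 k3 hk
  simp only [_root_.flagMap, ← Submodule.map_sup, h k1 k2 k3 hk, Submodule.map_top,
    LinearMap.range_eq_top.2 hg]

/-- The linear form `x ↦ v1 0 ∧ ⋯ ∧ v1 (a-1) ∧ v2 0 ∧ ⋯ ∧ v2 (b-1) ∧ x`. -/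
def wedgeForm {d a b : ℕ} (hab : a + b + 1 = d) (v1 v2 : ℕ → Fin d → ℂ) :
    (Fin d → ℂ) →ₗ[ℂ] ℂ :=
  (Matrix.detRowAlternating : (Fin d → ℂ) [⋀^Fin d]→ₗ[ℂ] ℂ).toMultilinearMap.toLinearMap
    (fun i => if (i : ℕ) < a then v1 i else v2 (i - a))
    ⟨a + b, by omega⟩

section wedgeForm

variable {d a b : ℕ} (hab : a + b + 1 = d) (v1 v2 : ℕ → Fin d → ℂ)

lemma wedgeForm_apply_eq_det (x : Fin d → ℂ) :
    wedgeForm hab v1 v2 x = Matrix.det (Function.update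
      (fun i : Fin d => if (i : ℕ) < a then v1 i else v2 (i - a)) ⟨a + b, by omega⟩ x) :=
  rfl

lemma wedgeForm_apply (x : Fin d → ℂ) :
    wedgeForm hab v1 v2 x = wedgeDet d a b v1 v2 fun _ => x := by
  refine (wedgeForm_apply_eq_det hab v1 v2 x).trans (congrArg Matrix.det (funext fun i => ?_))
  by_cases hi : i = ⟨a + b, by omega⟩
  · subst hi
    ext j
    simp
  · have hi' : (i : ℕ) < a + b := by
      have := i.isLt
      have : (i : ℕ) ≠ a + b := fun h => hi (Fin.ext h)
      omega
    ext j
    simp [Function.update_of_ne hi, hi', apply_ite (fun v : Fin d → ℂ => v j)]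

lemma wedgeForm_eq_zero_of_mem_span {x : Fin d → ℂ}
    (hx : x ∈ Submodule.span ℂ (v1 '' {m | m < a} ∪ v2 '' {m | m < b})) :
    wedgeForm hab v1 v2 x = 0 := by
  refine (Submodule.span_le (p := LinearMap.ker (wedgeForm hab v1 v2))).2 ?_ hx
  have hlast : ∀ i : Fin d, (i : ℕ) ≠ a + b → i ≠ ⟨a + b, by omega⟩ :=
    fun i h h' => h (congrArg Fin.val h')
  rintro _ (⟨m, hm, rfl⟩ | ⟨m, hm, rfl⟩) <;>
    simp only [Set.mem_ofPred_eq] at hm <;>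
    rw [SetLike.mem_coe, LinearMap.mem_ker, wedgeForm_apply_eq_det]
  · refine Matrix.det_zero_of_row_eq (hlast ⟨m, by omega⟩ (by simp; omega)) ?_
    simp [Function.update_of_ne (hlast ⟨m, _⟩ (by simp; omega)), hm]
  · refine Matrix.det_zero_of_row_eq (hlast ⟨a + m, by omega⟩ (by simp; omega)) ?_
    simp [Function.update_of_ne (hlast ⟨a + m, _⟩ (by simp; omega))]

end wedgeForm

namespace IsCompleteFlag

variable {d a b : ℕ} {F : ℕ → Submodule ℂ (Fin d → ℂ)}

lemma exists_mem_succ_notMem (hF : IsCompleteFlag d F) {k : ℕ} (hk : k < d) :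
    ∃ x ∈ F (k + 1), x ∉ F k := by
  refine SetLike.exists_of_lt (lt_of_le_of_ne (hF.1 k.le_succ) fun h => ?_)
  have := hF.2 (k + 1) hk
  rw [← h, hF.2 k hk.le] at this
  omega

lemma exists_isAdaptedBasis (hF : IsCompleteFlag d F) : ∃ v, IsAdaptedBasis d F v := by
  choose v hv hv' using fun k (hk : k < d) => hF.exists_mem_succ_notMem hk
  refine ⟨fun k => if h : k < d then v k h else 0, fun k hk => ?_⟩
  induction k with
  | zero => simpa using Submodule.finrank_eq_zero.mp (hF.2 0 hk)
  | succ k ih =>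
    have hkd : k < d := hk
    have hset : {m : ℕ | m < k + 1} = insert k {m | m < k} := by ext m; simp; omega
    rw [hset, Set.image_insert_eq, Submodule.span_insert, ← ih hkd.le, dif_pos hkd]
    have hle : Submodule.span ℂ {v k hkd} ⊔ F k ≤ F (k + 1) :=
      sup_le ((Submodule.span_singleton_le_iff_mem _ _).2 (hv k hkd)) (hF.1 k.le_succ)
    have hlt : F k < Submodule.span ℂ {v k hkd} ⊔ F k :=
      lt_of_le_of_ne le_sup_right fun h =>
        hv' k hkd (h ▸ Submodule.mem_sup_left (Submodule.mem_span_singleton_self _))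
    refine (Submodule.eq_of_le_of_finrank_le hle ?_).symm
    have := Submodule.finrank_lt_finrank_of_lt hlt
    rw [hF.2 k hkd.le] at this
    rw [hF.2 (k + 1) hk]
    exact this

lemma isAdaptedBasis_flagBasis (hF : IsCompleteFlag d F) : IsAdaptedBasis d F (flagBasis d F) :=
  Classical.epsilon_spec hF.exists_isAdaptedBasis

lemma isCompl_of_transverse {E : ℕ → Submodule ℂ (Fin d → ℂ)} (hF : IsCompleteFlag d F)
    (hE : IsCompleteFlag d E) (htr : TransverseFlags d F E) {k : ℕ} (hk : k ≤ d) :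
    IsCompl (F k) (E (d - k)) := by
  refine ⟨disjoint_iff.2 (Submodule.finrank_eq_zero.1 ?_), codisjoint_iff.2 (htr k hk)⟩
  have := Submodule.finrank_sup_add_finrank_inf_eq (F k) (E (d - k))
  rw [htr k hk, finrank_top, Module.finrank_fin_fun, hF.2 k hk, hE.2 (d - k) (by omega)] at this
  omega

lemma le_ker_wedgeForm_left (hF : IsCompleteFlag d F) (hab : a + b + 1 = d)
    (v : ℕ → Fin d → ℂ) : F a ≤ LinearMap.ker (wedgeForm hab (flagBasis d F) v) := by
  rw [hF.isAdaptedBasis_flagBasis a (by omega)]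
  exact fun x hx => wedgeForm_eq_zero_of_mem_span hab _ _
    (Submodule.span_mono Set.subset_union_left hx)

lemma le_ker_wedgeForm_right (hF : IsCompleteFlag d F) (hab : a + b + 1 = d)
    (v : ℕ → Fin d → ℂ) : F b ≤ LinearMap.ker (wedgeForm hab v (flagBasis d F)) := by
  rw [hF.isAdaptedBasis_flagBasis b (by omega)]
  exact fun x hx => wedgeForm_eq_zero_of_mem_span hab _ _
    (Submodule.span_mono Set.subset_union_right hx)

end IsCompleteFlag

lemma lineVec_mem_ne_zero {d : ℕ} {l : Submodule ℂ (Fin d → ℂ)} (h : ∃ v ∈ l, v ≠ 0) :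
    lineVec d l ∈ l ∧ lineVec d l ≠ 0 :=
  Classical.epsilon_spec h

lemma exists_lineVec_map_eq_smul {d : ℕ} {l : Submodule ℂ (Fin d → ℂ)}
    (hl : Module.finrank ℂ l = 1) {f : (Fin d → ℂ) →ₗ[ℂ] Fin d → ℂ}
    (hf : Function.Injective f) : ∃ t : ℂ, t ≠ 0 ∧ lineVec d (l.map f) = t • f (lineVec d l) := by
  obtain ⟨hu, hu0⟩ := lineVec_mem_ne_zero
    (Submodule.exists_mem_ne_zero_of_ne_bot (p := l) fun h => by subst h; simp at hl)
  obtain ⟨hw, hw0⟩ := lineVec_mem_ne_zero (l := l.map f)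
    ⟨_, Submodule.mem_map_of_mem hu, (map_ne_zero_iff f hf).2 hu0⟩
  obtain ⟨y, hy, hyw⟩ := Submodule.mem_map.1 hw
  obtain ⟨t, ht⟩ := (finrank_eq_one_iff_of_nonzero' (⟨_, hu⟩ : l) (by simpa using hu0)).1 hl ⟨y, hy⟩
  have hyt : y = t • lineVec d l := (congrArg Subtype.val ht).symm
  refine ⟨t, fun ht0 => hw0 ?_, by rw [← hyw, hyt, map_smul]⟩
  rw [← hyw, hyt, ht0, zero_smul, map_zero]

lemma doubleRatioLine_eq_div_mul {d : ℕ} (i : ℕ × ℕ) (G1 G2 : ℕ → Submodule ℂ (Fin d → ℂ))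
    (l1 l2 l2' : Submodule ℂ (Fin d → ℂ)) {r s : ℂ}
    (h1 : (wedgeDet d i.1 (i.2 - 1) (flagBasis d G1) (flagBasis d G2) fun _ => lineVec d l2') =
      s * wedgeDet d i.1 (i.2 - 1) (flagBasis d G1) (flagBasis d G2) fun _ => lineVec d l2)
    (h2 : (wedgeDet d (i.1 - 1) i.2 (flagBasis d G1) (flagBasis d G2) fun _ => lineVec d l2') =
      r * wedgeDet d (i.1 - 1) i.2 (flagBasis d G1) (flagBasis d G2) fun _ => lineVec d l2) :
    doubleRatioLine d i G1 G2 l1 l2' = r / s * doubleRatioLine d i G1 G2 l1 l2 := by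
  rw [doubleRatioLine, doubleRatioLine, h1, h2]
  ring

lemma wedgeDet_smul_mulVec {d i1 i2 a b : ℕ} {E1 E2 : ℕ → Submodule ℂ (Fin d → ℂ)}
    (hE1 : IsCompleteFlag d E1) (hE2 : IsCompleteFlag d E2) (hsup : E1 i1 ⊔ E2 i2 = ⊤)
    {c : Matrix (Fin d) (Fin d) ℂ} {z : ℂ} (hcz : ∀ v ∈ E1 i1, c.mulVecLin v = z • v)
    (hcid : ∀ v ∈ E2 i2, c.mulVecLin v = (1 : ℂ) • v) (hab : a + b + 1 = d)
    {t : ℂ} {x w : Fin d → ℂ} (hw : w = t • c.mulVec x) :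
    (i1 ≤ a → (wedgeDet d a b (flagBasis d E1) (flagBasis d E2) fun _ => w) =
      t * wedgeDet d a b (flagBasis d E1) (flagBasis d E2) fun _ => x) ∧
    (i2 ≤ b → (wedgeDet d a b (flagBasis d E1) (flagBasis d E2) fun _ => w) =
      t * z * wedgeDet d a b (flagBasis d E1) (flagBasis d E2) fun _ => x) := by
  simp only [← wedgeForm_apply hab, hw, ← Matrix.mulVecLin_apply, map_smul, smul_eq_mul]
  refine ⟨fun ha => ?_, fun hb => ?_⟩
  · rw [LinearMap.apply_apply_eq_mul_of_le_ker (sup_comm (E1 i1) _ ▸ hsup) hcid hcz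
      ((hE1.1 ha).trans (hE1.le_ker_wedgeForm_left hab _)), one_mul]
  · rw [LinearMap.apply_apply_eq_mul_of_le_ker hsup hcz hcid
      ((hE2.1 hb).trans (hE2.le_ker_wedgeForm_right hab _)), mul_assoc]

theorem statement_8_general (d : ℕ) (E1 E2 : ℕ → Submodule ℂ (Fin d → ℂ))
    (hE1 : IsCompleteFlag d E1) (hE2 : IsCompleteFlag d E2) (htr : TransverseFlags d E1 E2)
    (i1 i2 : ℕ) (hi : memA d (i1, i2)) (z : ℂ) (hz : z ≠ 0) :
    -- `ℂ^d = E1^(i1) ⊕ E2^(i2)`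
    IsCompl (E1 i1) (E2 i2) ∧
    -- there is a `c ∈ GL_d(ℂ)` acting as `z` on `E1^(i1)` and as the identity on `E2^(i2)`
    (∃ c : Matrix (Fin d) (Fin d) ℂ, IsUnit c ∧
        (∀ v ∈ E1 i1, c.mulVec v = z • v) ∧ ∀ v ∈ E2 i2, c.mulVec v = v) ∧
    -- and any such `c` preserves both flags and transforms double ratios as claimed
    ∀ c : Matrix (Fin d) (Fin d) ℂ, IsUnit c →
      (∀ v ∈ E1 i1, c.mulVec v = z • v) → (∀ v ∈ E2 i2, c.mulVec v = v) →
      flagMap d c E1 = E1 ∧ flagMap d c E2 = E2 ∧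
      ∀ F G : ℕ → Submodule ℂ (Fin d → ℂ), IsCompleteFlag d F → IsCompleteFlag d G →
        GenPos3 d E1 E2 F → GenPos3 d E1 E2 G →
        GenPos3 d E1 E2 (flagMap d c G) ∧
        doubleRatio d (i1, i2) E1 E2 F (flagMap d c G) =
          z * doubleRatio d (i1, i2) E1 E2 F G ∧
        ∀ k : ℕ × ℕ, memA d k → k ≠ (i1, i2) →
          doubleRatio d k E1 E2 F (flagMap d c G) = doubleRatio d k E1 E2 F G := by
  obtain ⟨hi1, hi2, hd⟩ := hi
  have hcompl : IsCompl (E1 i1) (E2 i2) := by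
    simpa [← hd] using hE1.isCompl_of_transverse hE2 htr (k := i1) (by omega)
  refine ⟨hcompl, Matrix.exists_isUnit_mulVec_eq_smul hcompl hz, fun c hc hcz hcid => ?_⟩
  replace hcid : ∀ v ∈ E2 i2, c.mulVecLin v = (1 : ℂ) • v := fun v hv => by simpa using hcid v hv
  have hsup := hcompl.sup_eq_top
  have hcE1 : flagMap d c E1 = E1 := funext fun k => Submodule.map_eq_self_of_le_or_ge hsup hz
    one_ne_zero hcz hcid ((le_total k i1).imp (@hE1.1 _ _) (@hE1.1 _ _))
  have hcE2 : flagMap d c E2 = E2 := funext fun k =>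
    Submodule.map_eq_self_of_le_or_ge (sup_comm (E1 i1) _ ▸ hsup) one_ne_zero hz hcid hcz
      ((le_total k i2).imp (@hE2.1 _ _) (@hE2.1 _ _))
  refine ⟨hcE1, hcE2, fun F G _ hG _ hposG => ?_⟩
  obtain ⟨t, ht, hw⟩ := exists_lineVec_map_eq_smul (f := c.mulVecLin) (hG.2 1 (by omega))
    (Matrix.mulVec_injective_iff_isUnit.2 hc)
  have key {a b : ℕ} (hab : a + b + 1 = d) :=
    wedgeDet_smul_mulVec hE1 hE2 hsup hcz hcid hab (x := lineVec d (G 1)) hw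
  simp only [doubleRatio, flagMap]
  refine ⟨?_, ?_, ?_⟩
  · simpa only [hcE1, hcE2] using hposG.flagMap (Matrix.mulVec_surjective_iff_isUnit.2 hc)
  · rw [doubleRatioLine_eq_div_mul _ _ _ _ _ _ ((key (by omega)).1 le_rfl)
      ((key (by omega)).2 le_rfl), mul_div_cancel_left₀ z ht]
  · rintro ⟨k1, k2⟩ ⟨hk1, hk2, hk⟩ hne
    have hk1i1 : k1 ≠ i1 := fun h => hne (by simp only at hk; ext <;> omega)
    rcases Nat.lt_or_gt_of_ne hk1i1 with h | h
    · rw [doubleRatioLine_eq_div_mul _ _ _ _ _ _ ((key (by omega)).2 (by omega))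
        ((key (by omega)).2 (by omega)), div_self (mul_ne_zero ht hz), one_mul]
    · rw [doubleRatioLine_eq_div_mul _ _ _ _ _ _ ((key (by omega)).1 (by omega))
        ((key (by omega)).1 (by omega)), div_self ht, one_mul]

theorem statement_8 (d : ℕ) (hd : 2 ≤ d) (E1 E2 : ℕ → Submodule ℂ (Fin d → ℂ))
    (hE1 : IsCompleteFlag d E1) (hE2 : IsCompleteFlag d E2) (htr : TransverseFlags d E1 E2)
    (i1 i2 : ℕ) (hi : memA d (i1, i2)) (z : ℂ) (hz : z ≠ 0) :
    -- `ℂ^d = E1^(i1) ⊕ E2^(i2)`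
    IsCompl (E1 i1) (E2 i2) ∧
    -- there is a `c ∈ GL_d(ℂ)` acting as `z` on `E1^(i1)` and as the identity on `E2^(i2)`
    (∃ c : Matrix (Fin d) (Fin d) ℂ, IsUnit c ∧
        (∀ v ∈ E1 i1, c.mulVec v = z • v) ∧ ∀ v ∈ E2 i2, c.mulVec v = v) ∧
    -- and any such `c` preserves both flags and transforms double ratios as claimed
    ∀ c : Matrix (Fin d) (Fin d) ℂ, IsUnit c →
      (∀ v ∈ E1 i1, c.mulVec v = z • v) → (∀ v ∈ E2 i2, c.mulVec v = v) →
      flagMap d c E1 = E1 ∧ flagMap d c E2 = E2 ∧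
      ∀ F G : ℕ → Submodule ℂ (Fin d → ℂ), IsCompleteFlag d F → IsCompleteFlag d G →
        GenPos3 d E1 E2 F → GenPos3 d E1 E2 G →
        GenPos3 d E1 E2 (flagMap d c G) ∧
        doubleRatio d (i1, i2) E1 E2 F (flagMap d c G) =
          z * doubleRatio d (i1, i2) E1 E2 F G ∧
        ∀ k : ℕ × ℕ, memA d k → k ≠ (i1, i2) →
          doubleRatio d k E1 E2 F (flagMap d c G) = doubleRatio d k E1 E2 F G :=
  statement_8_general d E1 E2 hE1 hE2 htr i1 i2 hi z hz
end
end

section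
/- Let (F1,F2,F3) be a triple of complete flags of ℂ^3 in general position. Then T^{(1,1,1)}(F1,F2,F3) = −1 if and only if the subspace F1^2 ∩ F2^2 ∩ F3^2 of ℂ^3 is 1-dimensional. -/
noncomputable section

/-!
Choose bases `a, b`, `c, d`, `e, f` adapted to `F1`, `F2`, `F3`; the triple ratio is then a
quotient `N / D` of products of `3 × 3` determinants, all nonzero by general position. The vector
`u = det(a, b, d) • c - det(a, b, c) • d` spans the line `F1² ∩ F2²`, and the identity
`N + D = det(a, c, e) · det(u, e, f)` shows that `T = -1` exactly when `u ∈ F3² = span {e, f}`,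
i.e. when the three planes share a line.
-/

open Submodule Module Matrix

section Linear

variable {K : Type*} [Field K]

theorem Matrix.linearIndependent_rows_iff_det_ne_zero {n : Type*} [Fintype n] [DecidableEq n]
    (A : Matrix n n K) : LinearIndependent K A.row ↔ A.det ≠ 0 := by
  rw [linearIndependent_rows_iff_isUnit, isUnit_iff_isUnit_det, isUnit_iff_ne_zero]

theorem Matrix.det_ne_zero_of_top_le_span_range_row {n : Type*} [Fintype n] [DecidableEq n]
    (A : Matrix n n K) (hA : ⊤ ≤ span K (Set.range A.row)) : A.det ≠ 0 :=
  A.linearIndependent_rows_iff_det_ne_zero.mp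
    (linearIndependent_of_top_le_span_of_card_eq_finrank hA (by simp))

variable {V : Type*} [AddCommGroup V] [Module K V]

theorem Submodule.finrank_span_pair {a b : V} (hab : LinearIndependent K ![a, b]) :
    finrank K ↥(span K {a, b}) = 2 := by
  have := finrank_span_eq_card hab
  rwa [range_cons_cons_empty, Fintype.card_fin] at this

theorem Submodule.finrank_span_singleton_inf_eq_one_iff {u : V} (hu : u ≠ 0)
    (W : Submodule K V) : finrank K ↥(span K {u} ⊓ W) = 1 ↔ u ∈ W := by
  constructor
  · intro h
    have : span K {u} ⊓ W = span K {u} :=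
      eq_of_le_of_finrank_eq inf_le_left (by rw [h, finrank_span_singleton hu])
    exact (span_singleton_le_iff_mem u W).mp (inf_eq_left.mp this)
  · intro huW
    rw [inf_eq_left.mpr ((span_singleton_le_iff_mem u W).mpr huW), finrank_span_singleton hu]

theorem Submodule.span_singleton_sup_eq_of_finrank_eq_succ [FiniteDimensional K V]
    {U W : Submodule K V} {w : V} (hUW : U ≤ W) (hrank : finrank K W = finrank K U + 1)
    (hwW : w ∈ W) (hwU : w ∉ U) : span K {w} ⊔ U = W := by
  refine eq_of_le_of_finrank_le (sup_le ((span_singleton_le_iff_mem _ _).mpr hwW) hUW) ?_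
  have hlt : U < span K {w} ⊔ U :=
    lt_of_le_of_ne le_sup_right fun h => hwU (h ▸ mem_sup_left (mem_span_singleton_self w))
  have := finrank_lt_finrank_of_lt hlt
  omega

end Linear

section ThreeSpace

variable {K : Type*} [Field K]

theorem det_of_vec3_rotate (x y z : Fin 3 → K) : (of ![y, z, x]).det = (of ![x, y, z]).det := by
  simp only [det_fin_three, of_apply, cons_val', cons_val_fin_one, cons_val_zero,
    cons_val_one, cons_val]
  ring

theorem linearIndependent_pair_of_det_ne_zero {x p q : Fin 3 → K}
    (h : (of ![x, p, q]).det ≠ 0) : LinearIndependent K ![p, q] :=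
  (linearIndependent_finCons.mp ((linearIndependent_rows_iff_det_ne_zero _).mpr h)).1

theorem mem_span_pair_iff_det_eq_zero {x p q : Fin 3 → K} (hpq : LinearIndependent K ![p, q]) :
    x ∈ span K {p, q} ↔ (of ![x, p, q]).det = 0 := by
  rw [← not_iff_not, ← ne_eq, ← linearIndependent_rows_iff_det_ne_zero]
  change _ ↔ LinearIndependent K (Fin.cons x ![p, q])
  rw [linearIndependent_finCons, range_cons_cons_empty]
  tauto

theorem span_eq_top_of_det_ne_zero {x y z : Fin 3 → K} (h : (of ![x, y, z]).det ≠ 0) :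
    span K {x, y, z} = ⊤ := by
  have := ((linearIndependent_rows_iff_det_ne_zero _).mpr h).span_eq_top_of_card_eq_finrank'
    (by simp)
  change span K (Set.range ![x, y, z]) = ⊤ at this
  rwa [range_cons, range_cons_cons_empty, Set.singleton_union] at this

theorem finrank_span_pair_inf_span_pair {a b c d : Fin 3 → K} (habc : (of ![a, b, c]).det ≠ 0)
    (hcd : LinearIndependent K ![c, d]) : finrank K ↥(span K {a, b} ⊓ span K {c, d}) = 1 := by
  have hab : LinearIndependent K ![a, b] :=
    linearIndependent_pair_of_det_ne_zero (x := c) (by rwa [← det_of_vec3_rotate c a b])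
  have hsup : span K {a, b} ⊔ span K {c, d} = ⊤ := by
    refine top_unique ((span_eq_top_of_det_ne_zero habc).ge.trans (span_le.mpr ?_))
    rintro _ (rfl | rfl | rfl)
    exacts [mem_sup_left (subset_span (by simp)), mem_sup_left (subset_span (by simp)),
      mem_sup_right (subset_span (by simp))]
  have := finrank_sup_add_finrank_inf_eq (span K {a, b}) (span K {c, d})
  rw [hsup, finrank_top, finrank_fin_fun, finrank_span_pair hab, finrank_span_pair hcd] at this
  omega

theorem tripleRatio_num_add_den_eq (a b c d e f : Fin 3 → K) :
    (of ![a, b, c]).det * (of ![a, e, f]).det * (of ![c, d, e]).det +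
        (of ![c, e, f]).det * (of ![a, c, d]).det * (of ![a, b, e]).det =
      (of ![a, c, e]).det *
        (of ![(of ![a, b, d]).det • c - (of ![a, b, c]).det • d, e, f]).det := by
  simp only [det_fin_three, of_apply, cons_val', cons_val_fin_one, cons_val_zero,
    cons_val_one, cons_val, Pi.sub_apply, Pi.smul_apply, smul_eq_mul]
  ring

theorem tripleRatio_det_eq_neg_one_iff {a b c d e f : Fin 3 → K}
    (habc : (of ![a, b, c]).det ≠ 0) (hacd : (of ![a, c, d]).det ≠ 0)
    (hace : (of ![a, c, e]).det ≠ 0) (hcef : (of ![c, e, f]).det ≠ 0)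
    (habe : (of ![a, b, e]).det ≠ 0) :
    (of ![a, b, c]).det * (of ![a, e, f]).det * (of ![c, d, e]).det /
        ((of ![c, e, f]).det * (of ![a, c, d]).det * (of ![a, b, e]).det) = -1 ↔
      finrank K ↥(span K {a, b} ⊓ span K {c, d} ⊓ span K {e, f}) = 1 := by
  have hab : LinearIndependent K ![a, b] :=
    linearIndependent_pair_of_det_ne_zero (x := c) (by rwa [← det_of_vec3_rotate c a b])
  have hcd := linearIndependent_pair_of_det_ne_zero hacd
  have hef := linearIndependent_pair_of_det_ne_zero hcef
  set u := (of ![a, b, d]).det • c - (of ![a, b, c]).det • d with hu_def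
  have hu : u ≠ 0 := by
    intro hu0
    have := LinearIndependent.pair_iff.mp hcd (of ![a, b, d]).det (-(of ![a, b, c]).det)
      (by rw [neg_smul, ← sub_eq_add_neg, ← hu_def, hu0])
    exact habc (neg_eq_zero.mp this.2)
  have hu_ab : u ∈ span K {a, b} := by
    rw [mem_span_pair_iff_det_eq_zero hab, hu_def]
    simp only [det_fin_three, of_apply, cons_val', cons_val_fin_one, cons_val_zero,
      cons_val_one, cons_val, Pi.sub_apply, Pi.smul_apply, smul_eq_mul]
    ring
  have hu_cd : u ∈ span K {c, d} := mem_span_pair.mpr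
    ⟨(of ![a, b, d]).det, -(of ![a, b, c]).det, by rw [hu_def, neg_smul, ← sub_eq_add_neg]⟩
  have hline : span K {a, b} ⊓ span K {c, d} = span K {u} :=
    (eq_of_le_of_finrank_eq ((span_singleton_le_iff_mem _ _).mpr (mem_inf.mpr ⟨hu_ab, hu_cd⟩))
      (by rw [finrank_span_singleton hu, finrank_span_pair_inf_span_pair habc hcd])).symm
  have hden : (of ![c, e, f]).det * (of ![a, c, d]).det * (of ![a, b, e]).det ≠ 0 :=
    mul_ne_zero (mul_ne_zero hcef hacd) habe
  have hsum : (of ![a, c, e]).det * (of ![u, e, f]).det =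
      (of ![a, b, c]).det * (of ![a, e, f]).det * (of ![c, d, e]).det +
        (of ![c, e, f]).det * (of ![a, c, d]).det * (of ![a, b, e]).det :=
    (tripleRatio_num_add_den_eq a b c d e f).symm
  rw [hline, finrank_span_singleton_inf_eq_one_iff hu, mem_span_pair_iff_det_eq_zero hef,
    div_eq_iff hden, ← mul_eq_zero_iff_left hace, hsum]
  constructor <;> intro h <;> linear_combination h

end ThreeSpace

section Flags

variable {d : ℕ} {F : ℕ → Submodule ℂ (Fin d → ℂ)}

theorem IsCompleteFlag.exists_isAdaptedBasis_s14 (hF : IsCompleteFlag d F) :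
    ∃ v, IsAdaptedBasis d F v := by
  have hstep : ∀ k < d, ∃ w ∈ F (k + 1), w ∉ F k := fun k hk =>
    SetLike.exists_of_lt <| lt_of_le_of_ne (hF.1 k.le_succ) fun heq => by
      have := hF.2 k hk.le
      rw [heq, hF.2 (k + 1) hk] at this
      omega
  choose! w hw_mem hw_not_mem using hstep
  refine ⟨w, fun k hk => ?_⟩
  induction k with
  | zero => simp [finrank_eq_zero.mp (hF.2 0 hk)]
  | succ k ih =>
    have himage : w '' {m | m < k + 1} = insert (w k) (w '' {m | m < k}) := by
      rw [← Set.image_insert_eq]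
      congr 1
      ext m
      simp only [Set.mem_ofPred_eq, Set.mem_insert_iff]
      omega
    rw [himage, span_insert, ← ih (by omega)]
    exact (span_singleton_sup_eq_of_finrank_eq_succ (hF.1 k.le_succ)
      (by rw [hF.2 _ hk, hF.2 _ (by omega)]) (hw_mem k hk) (hw_not_mem k hk)).symm

theorem IsCompleteFlag.isAdaptedBasis_flagBasis_s14 (hF : IsCompleteFlag d F) :
    IsAdaptedBasis d F (flagBasis d F) :=
  Classical.epsilon_spec hF.exists_isAdaptedBasis_s14

theorem IsAdaptedBasis.eq_span_pair {v : ℕ → Fin d → ℂ} (hv : IsAdaptedBasis d F v)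
    (hd : 2 ≤ d) : F 2 = span ℂ {v 0, v 1} := by
  rw [hv 2 hd]
  congr 1
  ext x
  simp [Nat.le_one_iff_eq_zero_or_eq_one, or_and_right, exists_or, eq_comm]

theorem wedgeDet_ne_zero {d a b : ℕ} {F1 F2 F3 : ℕ → Submodule ℂ (Fin d → ℂ)}
    {v1 v2 v3 : ℕ → Fin d → ℂ} (hv1 : IsAdaptedBasis d F1 v1) (hv2 : IsAdaptedBasis d F2 v2)
    (hv3 : IsAdaptedBasis d F3 v3) (hgen : GenPos3 d F1 F2 F3) (hab : a + b ≤ d) :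
    wedgeDet d a b v1 v2 v3 ≠ 0 := by
  refine Matrix.det_ne_zero_of_top_le_span_range_row _ ?_
  rw [← hgen a b (d - a - b) (by omega), hv1 a (by omega), hv2 b (by omega), hv3 _ (by omega)]
  refine sup_le (sup_le ?_ ?_) ?_ <;> refine span_mono ?_ <;> rintro _ ⟨m, hm : m < _, rfl⟩
  · exact ⟨⟨m, by omega⟩, by ext j; simp [Matrix.row, hm]⟩
  · exact ⟨⟨a + m, by omega⟩, by ext j; simp [Matrix.row, hm]⟩
  · refine ⟨⟨a + b + m, by omega⟩, ?_⟩
    ext j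
    simp [Matrix.row, show ¬a + b + m < a by omega, show a + b + m - a - b = m by omega]

end Flags

theorem statement_14 (F1 F2 F3 : ℕ → Submodule ℂ (Fin 3 → ℂ))
    (h1 : IsCompleteFlag 3 F1) (h2 : IsCompleteFlag 3 F2) (h3 : IsCompleteFlag 3 F3)
    (hgen : GenPos3 3 F1 F2 F3) :
    tripleRatio 3 (1, 1, 1) F1 F2 F3 = -1 ↔
      Module.finrank ℂ ↥(F1 2 ⊓ F2 2 ⊓ F3 2) = 1 := by
  have hv1 := h1.isAdaptedBasis_flagBasis_s14
  have hv2 := h2.isAdaptedBasis_flagBasis_s14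
  have hv3 := h3.isAdaptedBasis_flagBasis_s14
  set v1 := flagBasis 3 F1
  set v2 := flagBasis 3 F2
  set v3 := flagBasis 3 F3
  have hW : ∀ a b, a + b ≤ 3 → wedgeDet 3 a b v1 v2 v3 ≠ 0 :=
    fun _ _ => wedgeDet_ne_zero hv1 hv2 hv3 hgen
  have hT : tripleRatio 3 (1, 1, 1) F1 F2 F3 =
      (of ![v1 0, v1 1, v2 0]).det * (of ![v1 0, v3 0, v3 1]).det * (of ![v2 0, v2 1, v3 0]).det /
        ((of ![v2 0, v3 0, v3 1]).det * (of ![v1 0, v2 0, v2 1]).det *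
          (of ![v1 0, v1 1, v3 0]).det) := by
    simp [tripleRatio, wedgeDet, det_fin_three, v1, v2, v3]
  rw [hT, hv1.eq_span_pair (by norm_num), hv2.eq_span_pair (by norm_num),
    hv3.eq_span_pair (by norm_num)]
  exact tripleRatio_det_eq_neg_one_iff
    (by simpa [wedgeDet, det_fin_three] using hW 2 1 (by norm_num))
    (by simpa [wedgeDet, det_fin_three] using hW 1 2 (by norm_num))
    (by simpa [wedgeDet, det_fin_three] using hW 1 1 (by norm_num))
    (by simpa [wedgeDet, det_fin_three] using hW 0 1 (by norm_num))
    (by simpa [wedgeDet, det_fin_three] using hW 2 0 (by norm_num))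
end
end

section
/- Let d ≥ 1 and let K be a compact set of nilpotent d×d complex matrices. Then there exists a constant C > 0 such that ‖exp(tX) − 1‖ ≤ C·t·‖exp(X) − 1‖ for every t ∈ [0,1] and every X ∈ K, where exp denotes the matrix exponential and ‖·‖ is the operator norm on d×d complex matrices. -/
/-!
For nilpotent `A` the exponential series is a finite sum, so `exp A - 1 = A * φ(A)` with
`φ(z) = ∑ zⁿ / (n + 1)!`, and `φ(A)` is `1` plus a nilpotent element, hence invertible. Thus
`‖A‖ ≤ ‖exp A - 1‖ * ‖φ(A)⁻¹‖`. A nilpotent `d × d` matrix satisfies `A ^ d = 0`, so one truncation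
of `φ` works on all of `K`, and `A ↦ φ(A)⁻¹` is continuous on `K`, hence bounded. Combined with
`‖exp (t A) - 1‖ ≤ exp (t ‖A‖) - 1 ≤ t ‖A‖ exp ‖A‖` this gives the estimate.
-/

noncomputable section

/-- The operator norm of a `d × d` complex matrix, induced by the standard Hermitian norm
on `ℂ^d`. -/
noncomputable def opNorm (d : ℕ) (A : Matrix (Fin d) (Fin d) ℂ) : ℝ :=
  ‖LinearMap.toContinuousLinearMap (Matrix.toEuclideanLin A)‖

open Finset
open scoped Nat

theorem Matrix.pow_card_eq_zero_of_isNilpotent {n R : Type*} [Fintype n] [DecidableEq n]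
    [CommRing R] [IsDomain R] {X : Matrix n n R} (hX : IsNilpotent X) :
    X ^ Fintype.card n = 0 := by
  have hχ : X.charpoly = Polynomial.X ^ Fintype.card n :=
    sub_eq_zero.mp (Matrix.isNilpotent_charpoly_sub_pow_of_isNilpotent hX).eq_zero
  simpa [hχ] using X.aeval_self_charpoly

theorem Real.exp_sub_one_le_mul_exp (x : ℝ) : Real.exp x - 1 ≤ x * Real.exp x := by
  have h := mul_le_mul_of_nonneg_right (Real.add_one_le_exp (-x)) (Real.exp_pos x).le
  rw [← Real.exp_add, neg_add_cancel, Real.exp_zero] at h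
  linarith

namespace NormedSpace

section Exprel

variable {𝕂 𝔸 : Type*} [Field 𝕂] [Ring 𝔸] [Algebra 𝕂 𝔸]

variable (𝕂) in
/-- Truncation of `exprel z = (exp z - 1) / z = ∑ zⁿ / (n + 1)!`. -/
def exprelSum (N : ℕ) (A : 𝔸) : 𝔸 :=
  ∑ n ∈ range N, ((n + 1)! ⁻¹ : 𝕂) • A ^ n

theorem mul_exprelSum (N : ℕ) (A : 𝔸) :
    A * exprelSum 𝕂 N A = ∑ n ∈ range N, ((n + 1)! ⁻¹ : 𝕂) • A ^ (n + 1) := by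
  simp [exprelSum, mul_sum, pow_succ']

theorem isUnit_exprelSum_succ {A : 𝔸} (hA : IsNilpotent A) (N : ℕ) :
    IsUnit (exprelSum 𝕂 (N + 1) A) := by
  have hsplit :
      exprelSum 𝕂 (N + 1) A = 1 + A * ∑ n ∈ range N, ((n + 2)! ⁻¹ : 𝕂) • A ^ n := by
    rw [exprelSum, sum_range_succ', add_comm]
    simp [pow_succ', mul_sum]
  have hcomm : Commute A (∑ n ∈ range N, ((n + 2)! ⁻¹ : 𝕂) • A ^ n) :=
    .sum_right _ _ _ fun n _ ↦ ((Commute.refl A).pow_right n).smul_right _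
  rw [hsplit]
  exact (hcomm.isNilpotent_mul_right hA).isUnit_one_add

variable [CharZero 𝕂] [TopologicalSpace 𝔸] [IsTopologicalRing 𝔸]

variable (𝕂) in
theorem exp_eq_sum_range_of_pow_eq_zero {A : 𝔸} {N : ℕ} (hA : A ^ N = 0) :
    exp A = ∑ n ∈ range N, (n !⁻¹ : 𝕂) • A ^ n := by
  rw [exp_eq_tsum 𝕂]
  exact tsum_eq_sum fun n hn ↦ by
    rw [pow_eq_zero_of_le (by simpa using hn) hA, smul_zero]

theorem exp_sub_one_eq_mul_exprelSum {A : 𝔸} {N : ℕ} (hA : A ^ N = 0) :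
    exp A - 1 = A * exprelSum 𝕂 N A := by
  rw [exp_eq_sum_range_of_pow_eq_zero 𝕂 (pow_eq_zero_of_le N.le_succ hA), sum_range_succ',
    mul_exprelSum]
  simp

end Exprel

section Normed

variable {𝔸 : Type*} [NormedRing 𝔸]

theorem norm_exp_sub_one_le_of_pow_eq_zero (𝕂 : Type*) [RCLike 𝕂] [NormedAlgebra 𝕂 𝔸]
    {A : 𝔸} {N : ℕ} (hA : A ^ N = 0) :
    ‖exp A - 1‖ ≤ Real.exp ‖A‖ - 1 := by
  rw [exp_sub_one_eq_mul_exprelSum (𝕂 := 𝕂) hA, mul_exprelSum]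
  calc ‖∑ n ∈ range N, ((n + 1)! ⁻¹ : 𝕂) • A ^ (n + 1)‖
      ≤ ∑ n ∈ range N, ‖A‖ ^ (n + 1) / (n + 1)! := by
        refine norm_sum_le_of_le _ fun n _ ↦ ?_
        rw [norm_smul, norm_inv, RCLike.norm_natCast, inv_mul_eq_div]
        gcongr
        exact norm_pow_le' A n.succ_pos
    _ = (∑ n ∈ range (N + 1), ‖A‖ ^ n / n !) - 1 := by
        rw [sum_range_succ']
        simp
    _ ≤ Real.exp ‖A‖ - 1 := by
        gcongr
        exact Real.sum_le_exp_of_nonneg (norm_nonneg A) _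

theorem norm_exp_smul_sub_one_le_of_pow_eq_zero {𝕂 : Type*} [RCLike 𝕂] [NormedAlgebra 𝕂 𝔸]
    {A : 𝔸} {N : ℕ} (hA : A ^ N = 0) {t : ℝ} (ht : t ∈ Set.Icc (0 : ℝ) 1) :
    ‖exp ((t : 𝕂) • A) - 1‖ ≤ t * ‖A‖ * Real.exp ‖A‖ := by
  have htA : ((t : 𝕂) • A) ^ N = 0 := by rw [smul_pow, hA, smul_zero]
  have htA_le : t * ‖A‖ ≤ ‖A‖ := mul_le_of_le_one_left (norm_nonneg A) ht.2
  calc ‖exp ((t : 𝕂) • A) - 1‖ ≤ Real.exp (t * ‖A‖) - 1 := by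
        simpa [norm_smul, abs_of_nonneg ht.1] using norm_exp_sub_one_le_of_pow_eq_zero 𝕂 htA
    _ ≤ t * ‖A‖ * Real.exp (t * ‖A‖) := Real.exp_sub_one_le_mul_exp _
    _ ≤ t * ‖A‖ * Real.exp ‖A‖ := by gcongr; exact mul_nonneg ht.1 (norm_nonneg A)

variable [CompleteSpace 𝔸]

theorem exists_norm_le_mul_norm_exp_sub_one (𝕂 : Type*) [RCLike 𝕂] [NormedAlgebra 𝕂 𝔸]
    {K : Set 𝔸} (hK : IsCompact K) {N : ℕ} (hN : ∀ A ∈ K, A ^ N = 0) :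
    ∃ M > 0, ∀ A ∈ K, ‖A‖ ≤ M * ‖exp A - 1‖ := by
  have hunit : ∀ A ∈ K, IsUnit (exprelSum 𝕂 (N + 1) A) := fun A hA ↦
    isUnit_exprelSum_succ ⟨N, hN A hA⟩ N
  have hcont : ContinuousOn (fun A ↦ Ring.inverse (exprelSum 𝕂 (N + 1) A)) K := by
    intro A hA
    obtain ⟨u, hu⟩ := hunit A hA
    refine (ContinuousAt.comp (hu ▸ NormedRing.inverse_continuousAt u) ?_).continuousWithinAt
    exact (continuous_finsetSum _ fun n _ ↦ (continuous_pow n).const_smul _).continuousAt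
  obtain ⟨M, hM⟩ := hK.exists_bound_of_continuousOn hcont
  refine ⟨max M 1, one_pos.trans_le (le_max_right _ _), fun A hA ↦ ?_⟩
  have hA_eq : A = (exp A - 1) * Ring.inverse (exprelSum 𝕂 (N + 1) A) := by
    rw [exp_sub_one_eq_mul_exprelSum (𝕂 := 𝕂) (pow_eq_zero_of_le N.le_succ (hN A hA)),
      mul_assoc, Ring.mul_inverse_cancel _ (hunit A hA), mul_one]
  calc ‖A‖ = ‖(exp A - 1) * Ring.inverse (exprelSum 𝕂 (N + 1) A)‖ := congrArg norm hA_eq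
    _ ≤ ‖exp A - 1‖ * ‖Ring.inverse (exprelSum 𝕂 (N + 1) A)‖ := norm_mul_le _ _
    _ ≤ ‖exp A - 1‖ * max M 1 := by gcongr; exact (hM A hA).trans (le_max_left _ _)
    _ = max M 1 * ‖exp A - 1‖ := mul_comm _ _

theorem exists_norm_exp_smul_sub_one_le {𝕂 : Type*} [RCLike 𝕂] [NormedAlgebra 𝕂 𝔸]
    {K : Set 𝔸} (hK : IsCompact K) {N : ℕ} (hN : ∀ A ∈ K, A ^ N = 0) :
    ∃ C > 0, ∀ t ∈ Set.Icc (0 : ℝ) 1, ∀ A ∈ K,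
      ‖exp ((t : 𝕂) • A) - 1‖ ≤ C * t * ‖exp A - 1‖ := by
  obtain ⟨M, hM0, hM⟩ := exists_norm_le_mul_norm_exp_sub_one 𝕂 hK hN
  obtain ⟨R, hR⟩ := hK.isBounded.exists_norm_le
  refine ⟨M * Real.exp R, by positivity, fun t ht A hA ↦ ?_⟩
  have ht0 : 0 ≤ t := ht.1
  calc ‖exp ((t : 𝕂) • A) - 1‖ ≤ t * ‖A‖ * Real.exp ‖A‖ :=
        norm_exp_smul_sub_one_le_of_pow_eq_zero (hN A hA) ht
    _ ≤ t * (M * ‖exp A - 1‖) * Real.exp R := by grw [hM A hA, hR A hA]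
    _ = M * Real.exp R * t * ‖exp A - 1‖ := by ring

end Normed

end NormedSpace

theorem statement_15_general (d : ℕ) (K : Set (Matrix (Fin d) (Fin d) ℂ))
    (hK : IsCompact K) (hnil : ∀ X ∈ K, IsNilpotent X) :
    ∃ C : ℝ, 0 < C ∧ ∀ t : ℝ, t ∈ Set.Icc (0 : ℝ) 1 → ∀ X ∈ K,
      opNorm d (NormedSpace.exp ((t : ℂ) • X) - 1) ≤
        C * t * opNorm d (NormedSpace.exp X - 1) := by
  -- Under the L2 operator norm instance, `opNorm d A` is `‖A‖` by definition.
  open scoped Matrix.Norms.L2Operator in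
  exact NormedSpace.exists_norm_exp_smul_sub_one_le hK fun X hX ↦
    Matrix.pow_card_eq_zero_of_isNilpotent (hnil X hX)

theorem statement_15 (d : ℕ) (hd : 1 ≤ d) (K : Set (Matrix (Fin d) (Fin d) ℂ))
    (hK : IsCompact K) (hnil : ∀ X ∈ K, IsNilpotent X) :
    ∃ C : ℝ, 0 < C ∧ ∀ t : ℝ, t ∈ Set.Icc (0 : ℝ) 1 → ∀ X ∈ K,
      opNorm d (NormedSpace.exp ((t : ℂ) • X) - 1) ≤
        C * t * opNorm d (NormedSpace.exp X - 1) :=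
  statement_15_general d K hK hnil
end
end

section
/- Let d ≥ 1, let ι be a countable linearly ordered set, and let M : ι → M_d(ℂ) be a family of matrices with det(M_i) = 1 for every i ∈ ι, such that the family (‖M_i − 1‖)_{i∈ι} is summable, where ‖·‖ is the operator norm. For a finite subset s ⊆ ι, let P(s) denote the product of the matrices M_i for i ∈ s, taken in increasing order of the indices. Then there exists a matrix Λ ∈ M_d(ℂ) with det(Λ) = 1 such that, for every sequence (s_n)_{n≥1} of finite subsets of ι with s_n ⊆ s_{n+1} for all n and ⋃_n s_n = ι, the sequence P(s_n) converges to Λ. In particular, the limit is independent of the choice of such an exhausting sequence. -/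
/-!
For `s ⊆ t`, the ordered products `P s` of the `f i` satisfy
`‖P t - P s‖ ≤ ∏ i ∈ t, (1 + ‖f i - 1‖) - ∏ i ∈ s, (1 + ‖f i - 1‖)`: walk along the sorted
list of `t`, in which the sorted list of `s` is a sublist, and peel off one factor at a time.
The real products on the right converge because `∑ ‖f i - 1‖ < ∞`, so `P` is Cauchy along the
filter of finite subsets and converges there. Any increasing exhausting sequence tends to that
filter, and `det = 1` is a closed condition stable under products.
-/

noncomputable section

open Filter Topology

section OrderedProd

variable {ι A : Type*} [LinearOrder ι]

def Finset.orderedProd [Monoid A] (f : ι → A) (s : Finset ι) : A :=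
  ((s.sort (· ≤ ·)).map f).prod

theorem Finset.sort_sublist_sort {s t : Finset ι} (h : s ⊆ t) :
    (s.sort (· ≤ ·)).Sublist (t.sort (· ≤ ·)) :=
  List.sublist_of_subperm_of_pairwise
    (by rw [← Multiset.coe_le, Finset.sort_eq, Finset.sort_eq]; exact Finset.val_le_iff.mpr h)
    (s.pairwise_sort _) (t.pairwise_sort _)

theorem Finset.prod_map_sort [CommMonoid A] (s : Finset ι) (g : ι → A) :
    ((s.sort (· ≤ ·)).map g).prod = ∏ i ∈ s, g i := by
  rw [Finset.prod_eq_multiset_prod, ← Finset.sort_eq s (· ≤ ·), Multiset.map_coe,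
    Multiset.prod_coe]

theorem Finset.orderedProd_mem [Monoid A] {S : Submonoid A} {f : ι → A} (hf : ∀ i, f i ∈ S)
    (s : Finset ι) : s.orderedProd f ∈ S :=
  S.list_prod_mem (by simpa using fun i _ => hf i)

end OrderedProd

section NormedRing

variable {ι A : Type*} [NormedRing A] [NormOneClass A]

theorem norm_le_one_add_norm_sub_one (x : A) : ‖x‖ ≤ 1 + ‖x - 1‖ := by
  simpa using norm_le_norm_add_norm_sub' x 1

theorem List.norm_prod_map_le (f : ι → A) (l : List ι) :
    ‖(l.map f).prod‖ ≤ (l.map fun i => 1 + ‖f i - 1‖).prod := by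
  induction l with
  | nil => simp
  | cons a l ih =>
    simp only [List.map_cons, List.prod_cons]
    exact (norm_mul_le _ _).trans <|
      mul_le_mul (norm_le_one_add_norm_sub_one _) ih (norm_nonneg _) (by positivity)

theorem List.Sublist.norm_prod_map_sub_le (f : ι → A) {l₁ l₂ : List ι} (h : l₁.Sublist l₂) :
    ‖(l₂.map f).prod - (l₁.map f).prod‖ ≤
      (l₂.map fun i => 1 + ‖f i - 1‖).prod - (l₁.map fun i => 1 + ‖f i - 1‖).prod := by
  induction h with
  | slnil => simp
  | @cons l₁ l₂ a _ ih =>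
    simp only [List.map_cons, List.prod_cons]
    have split : f a * (l₂.map f).prod - (l₁.map f).prod =
        (f a - 1) * (l₂.map f).prod + ((l₂.map f).prod - (l₁.map f).prod) := by noncomm_ring
    rw [split]
    calc _ ≤ ‖f a - 1‖ * ‖(l₂.map f).prod‖ + ‖(l₂.map f).prod - (l₁.map f).prod‖ :=
          norm_add_le_of_le (norm_mul_le _ _) le_rfl
      _ ≤ ‖f a - 1‖ * (l₂.map fun i => 1 + ‖f i - 1‖).prod +
          ((l₂.map fun i => 1 + ‖f i - 1‖).prod - (l₁.map fun i => 1 + ‖f i - 1‖).prod) := by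
        gcongr
        exact List.norm_prod_map_le f l₂
      _ = _ := by ring
  | @cons_cons l₁ l₂ a _ ih =>
    simp only [List.map_cons, List.prod_cons]
    rw [← mul_sub, ← mul_sub]
    exact (norm_mul_le _ _).trans <|
      mul_le_mul (norm_le_one_add_norm_sub_one _) ih (norm_nonneg _) (by positivity)

variable [LinearOrder ι]

theorem Finset.norm_orderedProd_sub_le (f : ι → A) {s t : Finset ι} (h : s ⊆ t) :
    ‖t.orderedProd f - s.orderedProd f‖ ≤
      ∏ i ∈ t, (1 + ‖f i - 1‖) - ∏ i ∈ s, (1 + ‖f i - 1‖) := by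
  simpa only [Finset.orderedProd, Finset.prod_map_sort] using
    (Finset.sort_sublist_sort h).norm_prod_map_sub_le f

theorem Finset.cauchySeq_orderedProd {f : ι → A} (hf : Summable fun i => ‖f i - 1‖) :
    CauchySeq fun s : Finset ι => s.orderedProd f := by
  have hQ : CauchySeq fun s : Finset ι => ∏ i ∈ s, (1 + ‖f i - 1‖) :=
    (Real.multipliable_one_add_of_summable hf).hasProd.cauchySeq
  rw [Metric.cauchySeq_iff'] at hQ ⊢
  intro ε hε
  obtain ⟨s₀, hs₀⟩ := hQ ε hε
  refine ⟨s₀, fun t ht => ?_⟩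
  rw [dist_eq_norm]
  exact (Finset.norm_orderedProd_sub_le f ht).trans_lt ((le_abs_self _).trans_lt (hs₀ t ht))

end NormedRing

theorem Matrix.det_orderedProd {ι n R : Type*} [LinearOrder ι] [Fintype n] [DecidableEq n]
    [CommRing R] {M : ι → Matrix n n R} (hM : ∀ i, (M i).det = 1) (s : Finset ι) :
    (s.orderedProd M).det = 1 :=
  Finset.orderedProd_mem (S := MonoidHom.mker (Matrix.detMonoidHom : Matrix n n R →* R)) hM s

open scoped Matrix.Norms.L2Operator

theorem statement_18_general (d : ℕ) (hd : 1 ≤ d) (ι : Type) [LinearOrder ι]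
    (M : ι → Matrix (Fin d) (Fin d) ℂ) (hdet : ∀ i, (M i).det = 1)
    (hsum : Summable fun i => opNorm d (M i - 1)) :
    ∃ Λ : Matrix (Fin d) (Fin d) ℂ, Λ.det = 1 ∧
      ∀ s : ℕ → Finset ι, (∀ n, s n ⊆ s (n + 1)) → (∀ i, ∃ n, i ∈ s n) →
        Filter.Tendsto (fun n => (((s n).sort (· ≤ ·)).map M).prod)
          Filter.atTop (nhds Λ) := by
  -- `opNorm d` is definitionally the L2 operator norm, which is a `NormOneClass` once `d ≠ 0`.
  have : NeZero d := ⟨by omega⟩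
  obtain ⟨Λ, hΛ⟩ := cauchySeq_tendsto_of_complete (Finset.cauchySeq_orderedProd (f := M) hsum)
  refine ⟨Λ, ?_, fun s hmono hexh =>
    hΛ.comp (tendsto_atTop_finset_of_monotone (monotone_nat_of_le_succ hmono) hexh)⟩
  exact (isClosed_eq continuous_id.matrix_det continuous_const).mem_of_tendsto hΛ
    (Eventually.of_forall (Matrix.det_orderedProd hdet))

theorem statement_18 (d : ℕ) (hd : 1 ≤ d) (ι : Type) [Countable ι] [LinearOrder ι]
    (M : ι → Matrix (Fin d) (Fin d) ℂ) (hdet : ∀ i, (M i).det = 1)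
    (hsum : Summable fun i => opNorm d (M i - 1)) :
    ∃ Λ : Matrix (Fin d) (Fin d) ℂ, Λ.det = 1 ∧
      ∀ s : ℕ → Finset ι, (∀ n, s n ⊆ s (n + 1)) → (∀ i, ∃ n, i ∈ s n) →
        Filter.Tendsto (fun n => (((s n).sort (· ≤ ·)).map M).prod)
          Filter.atTop (nhds Λ) :=
  statement_18_general d hd ι M hdet hsum
end
end
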